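/- arXiv:1506.03508 — 7 statements merged into one kernel-verified Lean document; each statement's English description precedes it below -/
import Mathlib

section
/- (Fundamental theorem of P-partitions.) Every P-partition σ belongs to A(π) for exactly one linear extension π ∈ L(P); moreover, for every π ∈ L(P), every element of A(π) is a P-partition. Hence the set of P-partitions is the disjoint union of the sets A(π) over π ∈ L(P). -/
open scoped Classical

/-- A `P`-partition for the partial order `P` on `Fin p` (elements serve as their own
labels, via the canonical identification of `Fin p` with `[p] = {1,…,p}`):
`σ j ≤ σ i` whenever `i ≺ j`, and moreover `σ j < σ i` whenever `i ≺ j` and `i > j`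
as integers. -/
def IsPPartition (p : ℕ) (P : PartialOrder (Fin p)) (σ : Fin p → ℕ) : Prop :=
  ∀ i j : Fin p, P.lt i j → σ j ≤ σ i ∧ (j < i → σ j < σ i)

/-- `π` is a linear extension of `P`: a bijection of `[p]` such that
`π i ≺ π j` implies `i < j`. -/
def IsLinExt (p : ℕ) (P : PartialOrder (Fin p)) (π : Equiv.Perm (Fin p)) : Prop :=
  ∀ i j : Fin p, P.lt (π i) (π j) → i < j

/-- `σ ∈ 𝒜(π)` : `σ (π 1) ≥ σ (π 2) ≥ ⋯ ≥ σ (π p)`, with strict inequality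
`σ (π i) > σ (π (i+1))` whenever `π i > π (i+1)` as integers. -/
def MemA (p : ℕ) (π : Equiv.Perm (Fin p)) (σ : Fin p → ℕ) : Prop :=
  ∀ i j : Fin p, (i : ℕ) + 1 = (j : ℕ) →
    σ (π j) ≤ σ (π i) ∧ (π j < π i → σ (π j) < σ (π i))

/-!
Order `[p]` by the key `i ↦ (σ i, i)`, with `σ` decreasing and ties broken by the label.
The key is injective, and both `P`-partitions and `𝒜(π)` are comparisons of keys: `σ` is a
`P`-partition iff the key is strictly monotone along `≺`, and `σ ∈ 𝒜(π)` iff it is strictly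
increasing along `π`. So `π` must be the permutation sorting the keys, and it is a linear
extension exactly when the key is strictly monotone along `≺`.
-/

theorem strictMono_iff_lt_of_val_add_one_eq {α : Type*} [Preorder α] {n : ℕ}
    {f : Fin n → α} : StrictMono f ↔ ∀ i j : Fin n, (i : ℕ) + 1 = j → f i < f j := by
  refine ⟨fun hf i j hij => hf (Fin.lt_def.2 (by omega)), fun h => ?_⟩
  cases n with
  | zero => exact fun i => i.elim0
  | succ n => exact Fin.strictMono_iff_lt_succ.2 fun i => h _ _ (by simp)

theorem existsUnique_perm_strictMono_comp {α : Type*} [LinearOrder α] {n : ℕ}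
    {f : Fin n → α} (hf : Function.Injective f) :
    ∃! π : Equiv.Perm (Fin n), StrictMono (f ∘ π) := by
  have hsort : StrictMono (f ∘ Tuple.sort f) :=
    (Tuple.monotone_sort f).strictMono_of_injective (hf.comp (Tuple.sort f).injective)
  refine ⟨Tuple.sort f, hsort, fun π hπ => ?_⟩
  have hrange : Set.range (f ∘ π) = Set.range (f ∘ Tuple.sort f) := by
    simp only [Set.range_comp, Equiv.range_eq_univ]
  have hcomp : f ∘ π = f ∘ Tuple.sort f := (hπ.range_inj hsort).1 hrange
  exact Equiv.ext fun i => hf (congrFun hcomp i)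

-- `P` is bound after `hf`: as a local instance it would otherwise order the domain in `hf`.
theorem isLinExt_iff_of_strictMono_comp {α : Type*} [Preorder α] {p : ℕ}
    {π : Equiv.Perm (Fin p)} {f : Fin p → α} (hf : StrictMono (f ∘ π))
    {P : PartialOrder (Fin p)} : IsLinExt p P π ↔ ∀ a b, P.lt a b → f a < f b := by
  refine ⟨fun hπ a b hab => ?_, fun h i j hij => ?_⟩
  · rw [← π.apply_symm_apply a, ← π.apply_symm_apply b] at hab ⊢
    exact hf (hπ _ _ hab)
  · exact (hf.lt_iff_lt (a := i) (b := j)).1 (h _ _ hij)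

theorem toLex_toDual_lt_toLex_toDual_iff {α β : Type*} [LinearOrder α] [LinearOrder β]
    {a b : α} {i j : β} (hij : i ≠ j) :
    toLex (OrderDual.toDual a, i) < toLex (OrderDual.toDual b, j) ↔
      b ≤ a ∧ (j < i → b < a) := by
  rw [Prod.Lex.toLex_lt_toLex, OrderDual.toDual_lt_toDual, OrderDual.toDual_inj]
  rcases lt_trichotomy a b with h | rfl | h
  · simp [h.not_gt, h.not_ge, h.ne]
  · simp [hij.le_iff_lt]
  · simp [h, h.le]

-- The label enters as `(i : ℕ)`, so that no order on `Fin p` (where `P` may be an instance)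
-- is involved in comparing keys.
def partitionKey {p : ℕ} (σ : Fin p → ℕ) (i : Fin p) : ℕᵒᵈ ×ₗ ℕ :=
  toLex (OrderDual.toDual (σ i), (i : ℕ))

theorem partitionKey_injective {p : ℕ} (σ : Fin p → ℕ) :
    Function.Injective (partitionKey σ) :=
  fun _ _ h => Fin.ext (congrArg Prod.snd (toLex.injective h))

theorem isPPartition_iff {p : ℕ} {P : PartialOrder (Fin p)} {σ : Fin p → ℕ} :
    IsPPartition p P σ ↔ ∀ a b, P.lt a b → partitionKey σ a < partitionKey σ b := by
  refine forall₂_congr fun a b => imp_congr_right fun hab => ?_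
  exact (toLex_toDual_lt_toLex_toDual_iff (Fin.val_injective.ne (ne_of_lt hab))).symm

theorem memA_iff {p : ℕ} {π : Equiv.Perm (Fin p)} {σ : Fin p → ℕ} :
    MemA p π σ ↔ StrictMono (partitionKey σ ∘ π) := by
  rw [strictMono_iff_lt_of_val_add_one_eq]
  refine forall₂_congr fun i j => imp_congr_right fun hij => ?_
  refine (toLex_toDual_lt_toLex_toDual_iff (Fin.val_injective.ne (π.injective.ne ?_))).symm
  exact Fin.ne_of_val_ne (by omega)

theorem fundamental_theorem_of_P_partitions_general (p : ℕ)
    (P : PartialOrder (Fin p)) :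
    (∀ σ : Fin p → ℕ, IsPPartition p P σ →
        ∃! π : Equiv.Perm (Fin p), IsLinExt p P π ∧ MemA p π σ) ∧
    (∀ π : Equiv.Perm (Fin p), IsLinExt p P π →
        ∀ σ : Fin p → ℕ, MemA p π σ → IsPPartition p P σ) := by
  refine ⟨fun σ hσ => ?_, fun π hπ σ hσ => ?_⟩
  · obtain ⟨π, hsorted, hunique⟩ :=
      existsUnique_perm_strictMono_comp (partitionKey_injective σ)
    refine ⟨π, ⟨?_, memA_iff.2 hsorted⟩, fun π' hπ' => hunique π' (memA_iff.1 hπ'.2)⟩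
    exact (isLinExt_iff_of_strictMono_comp hsorted).2 (isPPartition_iff.1 hσ)
  · rw [memA_iff] at hσ
    exact isPPartition_iff.2 ((isLinExt_iff_of_strictMono_comp hσ).1 hπ)

/-- **Fundamental theorem of `P`-partitions** : every `P`-partition lies in `𝒜(π)` for
exactly one linear extension `π ∈ L(P)`, and conversely every member of `𝒜(π)` for
`π ∈ L(P)` is a `P`-partition; hence the set of `P`-partitions is the disjoint union
of the `𝒜(π)`, `π ∈ L(P)`. -/
theorem fundamental_theorem_of_P_partitions (p : ℕ) (hp : 0 < p)
    (P : PartialOrder (Fin p)) :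
    (∀ σ : Fin p → ℕ, IsPPartition p P σ →
        ∃! π : Equiv.Perm (Fin p), IsLinExt p P π ∧ MemA p π σ) ∧
    (∀ π : Equiv.Perm (Fin p), IsLinExt p P π →
        ∀ σ : Fin p → ℕ, MemA p π σ → IsPPartition p P σ) :=
  fundamental_theorem_of_P_partitions_general p P
end

section
/- In the ring of formal power series in t with coefficients in ℤ[q], the identity (∏_{i=0}^{p} (1 − t q^i)) · ∑_{m≥0} U_m(P) t^m = ∑_{π ∈ L(P)} q^{maj(π)} t^{des(π)} holds, where U_m(P) ∈ ℤ[q] is the polynomial ∑_σ q^{σ(1)+⋯+σ(p)}, the sum being over all P-partitions σ whose values are all at most m. -/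
open scoped Classical

/-- The descent set of the word `f 1, f 2, …, f p` (1-based positions, so that
position `i ∈ [p-1]` is a descent iff the `i`-th letter exceeds the `(i+1)`-st). -/
def desSet (p : ℕ) (f : Fin p → ℕ) : Finset ℕ :=
  (Finset.Ico 1 p).filter fun i =>
    ∃ (h1 : i - 1 < p) (h2 : i < p), f ⟨i, h2⟩ < f ⟨i - 1, h1⟩

/-- `U_m(P) ∈ ℤ[q]` : the sum of `q^{σ(1)+⋯+σ(p)}` over all `P`-partitions `σ`
with all values at most `m`. -/
noncomputable def Upoly (p : ℕ) (P : PartialOrder (Fin p)) (m : ℕ) : Polynomial ℤ :=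
  ∑ σ ∈ Finset.univ.filter
      (fun σ : Fin p → Fin (m + 1) => IsPPartition p P fun i => (σ i : ℕ)),
    Polynomial.X ^ (∑ i, (σ i : ℕ))

/-!
Stanley's fundamental lemma: listing the labels by decreasing value of a `P`-partition `σ`, ties
broken by increasing label, yields a linear extension `π`, and `σ ∘ π` is weakly decreasing with
strict drops exactly at the descents of `π`; conversely every such pair `(π, σ ∘ π)` comes from a
unique `P`-partition. So `U_m(P)` splits over `L(P)`. Subtracting from `σ ∘ π` the number of
descents of `π` to the right of each position leaves a weakly decreasing function bounded by
`m - des π` and lowers the weight by `maj π`. Hence each summand contributes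
`q^{maj π} t^{des π}` times the generating function of partitions with at most `p` parts in a box,
which is `1 / ∏_{i=0}^{p} (1 - t q^i)` by the `q`-Pascal recursion obtained by removing a zero
last part or lowering every part by one.
-/

open Finset

noncomputable section

variable {R : Type*}

def boundedFuns (p m : ℕ) : Finset (Fin p → ℕ) :=
  Fintype.piFinset fun _ => range (m + 1)

@[simp]
lemma mem_boundedFuns {p m : ℕ} {f : Fin p → ℕ} :
    f ∈ boundedFuns p m ↔ ∀ i, f i ≤ m := by
  simp [boundedFuns]

section antitoneSum

variable [CommSemiring R] (q : R)

def antitoneSum (p m : ℕ) : R :=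
  ∑ h ∈ (boundedFuns p m).filter Antitone, q ^ ∑ i, h i

lemma antitoneSum_zero_left (m : ℕ) : antitoneSum q 0 m = 1 := by
  have : (boundedFuns 0 m).filter Antitone = {Fin.elim0} := by
    ext f
    simp [Subsingleton.elim f Fin.elim0, Subsingleton.antitone]
  simp [antitoneSum, this]

lemma antitoneSum_zero_right (p : ℕ) : antitoneSum q p 0 = 1 := by
  have : (boundedFuns p 0).filter Antitone = {0} := by
    ext f
    simp only [mem_filter, mem_boundedFuns, nonpos_iff_eq_zero, mem_singleton, funext_iff,
      Pi.zero_apply]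
    exact ⟨And.left, fun h => ⟨h, fun i j _ => by simp [h]⟩⟩
  simp [antitoneSum, this]

lemma antitone_snoc_zero_iff {p : ℕ} {τ : Fin p → ℕ} :
    Antitone (Fin.snoc (α := fun _ => ℕ) τ 0) ↔ Antitone τ := by
  refine ⟨fun h i j hij => by simpa using h (Fin.castSucc_le_castSucc_iff.2 hij),
    fun h i j hij => ?_⟩
  induction j using Fin.lastCases with
  | last => simp
  | cast j =>
    obtain ⟨i, rfl⟩ := Fin.exists_castSucc_eq.2
      (Fin.ne_last_of_lt (lt_of_le_of_lt hij (Fin.castSucc_lt_last j)))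
    simpa using h (Fin.castSucc_le_castSucc_iff.1 hij)

lemma sum_antitone_last_eq_zero (p m : ℕ) :
    ∑ h ∈ (boundedFuns (p + 1) m).filter Antitone with h (Fin.last p) = 0, q ^ ∑ i, h i =
      antitoneSum q p m := by
  refine sum_nbij' Fin.init (fun τ => Fin.snoc τ 0) ?_ ?_ ?_ ?_ ?_
  · simp only [mem_filter, mem_boundedFuns]
    rintro h ⟨⟨hbound, hanti⟩, hlast⟩
    refine ⟨fun i => hbound _, ?_⟩
    rwa [← antitone_snoc_zero_iff, ← hlast, Fin.snoc_init_self]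
  · simp only [mem_filter, mem_boundedFuns]
    rintro τ ⟨hbound, hanti⟩
    refine ⟨⟨fun i => ?_, antitone_snoc_zero_iff.2 hanti⟩, by simp⟩
    induction i using Fin.lastCases <;> simp [hbound]
  · intro h hh
    simp [← (mem_filter.1 hh).2]
  · intro τ _
    simp
  · intro h hh
    simp [Fin.sum_univ_castSucc, (mem_filter.1 hh).2, Fin.init]

lemma sum_antitone_last_ne_zero (p m : ℕ) :
    ∑ h ∈ (boundedFuns (p + 1) (m + 1)).filter Antitone with h (Fin.last p) ≠ 0,
        q ^ ∑ i, h i =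
      q ^ (p + 1) * antitoneSum q (p + 1) m := by
  have one_le {h : Fin (p + 1) → ℕ} (hh : Antitone h) (hlast : h (Fin.last p) ≠ 0) (i) :
      1 ≤ h i :=
    (Nat.one_le_iff_ne_zero.2 hlast).trans (hh (Fin.le_last i))
  rw [antitoneSum, mul_sum]
  refine sum_nbij' (· - 1) (· + 1) ?_ ?_ ?_ ?_ ?_
  · intro h hh
    simp only [mem_filter, mem_boundedFuns] at hh ⊢
    exact ⟨fun i => by simpa using Nat.sub_le_sub_right (hh.1.1 i) 1,
      fun i j hij => Nat.sub_le_sub_right (hh.1.2 hij) 1⟩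
  · intro τ hτ
    simp only [mem_filter, mem_boundedFuns] at hτ ⊢
    exact ⟨⟨fun i => by simpa using hτ.1 i, hτ.2.add_const 1⟩, by simp⟩
  · intro h hh
    simp only [mem_filter] at hh
    ext i
    simp [Nat.sub_add_cancel (one_le hh.1.2 hh.2 i)]
  · intro τ _
    simp
  · intro h hh
    simp only [mem_filter] at hh
    have hsum : ∑ i, h i = ∑ i, ((h - 1) i + 1) :=
      sum_congr rfl fun i _ => by simp [Nat.sub_add_cancel (one_le hh.1.2 hh.2 i)]
    rw [← pow_add, hsum, sum_add_distrib]
    simp [add_comm]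

lemma antitoneSum_succ_succ (p m : ℕ) :
    antitoneSum q (p + 1) (m + 1) =
      antitoneSum q p (m + 1) + q ^ (p + 1) * antitoneSum q (p + 1) m := by
  rw [← sum_antitone_last_eq_zero q p (m + 1), ← sum_antitone_last_ne_zero q p m,
    sum_filter_add_sum_filter_not, antitoneSum]

end antitoneSum

lemma PowerSeries.one_sub_C_mul_X_mul_mk [CommRing R] (a : R) {f g : ℕ → R} (h₀ : f 0 = g 0)
    (hsucc : ∀ n, f (n + 1) = g (n + 1) + a * f n) :
    (1 - PowerSeries.C a * PowerSeries.X) * PowerSeries.mk f = PowerSeries.mk g := by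
  ext (_ | n) <;> simp [sub_mul, mul_assoc, PowerSeries.coeff_succ_X_mul, h₀, hsucc]

lemma prod_one_sub_C_mul_X_mul_mk_antitoneSum [CommRing R] (q : R) (p : ℕ) :
    (∏ i ∈ range (p + 1), (1 - PowerSeries.C (q ^ i) * PowerSeries.X)) *
      PowerSeries.mk (antitoneSum q p) = 1 := by
  induction p with
  | zero =>
    rw [funext (antitoneSum_zero_left q), prod_range_one, pow_zero, map_one, one_mul, mul_comm]
    exact PowerSeries.mk_one_mul_one_sub_eq_one R
  | succ p ih =>
    rw [prod_range_succ, mul_assoc, PowerSeries.one_sub_C_mul_X_mul_mk _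
      ((antitoneSum_zero_right q _).trans (antitoneSum_zero_right q _).symm)
      (antitoneSum_succ_succ q p), ih]

def descentShift (S : Finset ℕ) (i : ℕ) : ℕ := #{s ∈ S | i < s}

lemma descentShift_eq_succ_add (S : Finset ℕ) (i : ℕ) :
    descentShift S i = descentShift S (i + 1) + if i + 1 ∈ S then 1 else 0 := by
  simp only [descentShift, card_filter]
  rw [← sum_ite_eq' S (i + 1) (fun _ => 1), ← sum_add_distrib]
  refine sum_congr rfl fun s _ => ?_
  split_ifs <;> omega

lemma descentShift_eq_zero {S : Finset ℕ} {i : ℕ} (h : ∀ s ∈ S, s ≤ i) :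
    descentShift S i = 0 := by
  simpa [descentShift, filter_eq_empty_iff] using h

lemma descentShift_zero {S : Finset ℕ} (h : 0 ∉ S) : descentShift S 0 = #S := by
  rw [descentShift, filter_true_of_mem fun s hs => Nat.pos_of_ne_zero (ne_of_mem_of_not_mem hs h)]

lemma descentShift_le_card (S : Finset ℕ) (i : ℕ) : descentShift S i ≤ #S :=
  card_filter_le _ _

lemma sum_descentShift {S : Finset ℕ} {p : ℕ} (h : ∀ s ∈ S, s ≤ p) :
    ∑ i : Fin p, descentShift S i = S.sum id := by
  simp only [descentShift, card_filter]
  rw [sum_comm]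
  refine sum_congr rfl fun s hs => ?_
  rw [← card_filter, Fin.card_filter_val_lt, min_eq_right (h s hs), id]

section compatibleSum

variable {p : ℕ} {S : Finset ℕ}

/-- `g` is weakly decreasing and drops strictly at each position `s ∈ S`, i.e. from `g (s - 1)`
to `g s`; equivalently `g - descentShift S` is antitone. -/
def IsCompatible (S : Finset ℕ) (g : Fin p → ℕ) : Prop :=
  Antitone fun i : Fin p => (g i : ℤ) - descentShift S i

lemma IsCompatible.descentShift_le (hS : S ⊆ Ico 1 p) {g : Fin p → ℕ} (hg : IsCompatible S g)
    (i : Fin p) : descentShift S i ≤ g i := by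
  have hi := i.isLt
  have hlast :
      (g ⟨p - 1, by omega⟩ : ℤ) - descentShift S (p - 1) ≤ g i - descentShift S i :=
    hg (Fin.le_iff_val_le_val.2 (Nat.le_sub_one_of_lt hi))
  rw [descentShift_eq_zero fun s hs => by have := mem_Ico.1 (hS hs); omega] at hlast
  omega

lemma IsCompatible.antitone_sub (hS : S ⊆ Ico 1 p) {g : Fin p → ℕ} (hg : IsCompatible S g) :
    Antitone fun i : Fin p => g i - descentShift S i := fun i j hij => by
  have hgij := hg hij
  have := hg.descentShift_le hS i
  have := hg.descentShift_le hS j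
  simp only at hgij ⊢
  omega

lemma Antitone.isCompatible_add {h : Fin p → ℕ} (hh : Antitone h) (S : Finset ℕ) :
    IsCompatible S fun i => h i + descentShift S i := fun _ _ hij => by
  simpa using hh hij

variable [CommSemiring R] (q : R)

def compatibleSum (q : R) (p : ℕ) (S : Finset ℕ) (m : ℕ) : R :=
  ∑ g ∈ (boundedFuns p m).filter (IsCompatible S), q ^ ∑ i, g i

lemma compatibleSum_add_card (hS : S ⊆ Ico 1 p) (m : ℕ) :
    compatibleSum q p S (m + #S) = q ^ S.sum id * antitoneSum q p m := by
  have hzero : descentShift S 0 = #S := descentShift_zero fun h => by simpa using hS h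
  rw [compatibleSum, antitoneSum, mul_sum]
  refine sum_nbij' (fun g i => g i - descentShift S i) (fun h i => h i + descentShift S i)
    ?_ ?_ ?_ ?_ ?_
  · intro g hg
    simp only [mem_filter, mem_boundedFuns] at hg ⊢
    refine ⟨fun i => ?_, hg.2.antitone_sub hS⟩
    have h0 := hg.2.antitone_sub hS
      (show ⟨0, i.pos⟩ ≤ i from Fin.le_iff_val_le_val.2 (Nat.zero_le _))
    have := hg.1 ⟨0, i.pos⟩
    simp only [hzero] at h0
    omega
  · intro h hh
    simp only [mem_filter, mem_boundedFuns] at hh ⊢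
    refine ⟨fun i => ?_, hh.2.isCompatible_add S⟩
    have := hh.1 i
    have := descentShift_le_card S i
    omega
  · intro g hg
    ext i
    simpa using Nat.sub_add_cancel ((mem_filter.1 hg).2.descentShift_le hS i)
  · intro h _
    simp
  · intro g hg
    have hsum : ∑ i, g i = ∑ i, ((g i - descentShift S i) + descentShift S i) :=
      sum_congr rfl fun i _ => (Nat.sub_add_cancel ((mem_filter.1 hg).2.descentShift_le hS i)).symm
    rw [← pow_add, hsum, sum_add_distrib, sum_descentShift fun s hs => (mem_Ico.1 (hS hs)).2.le,
      add_comm]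

lemma compatibleSum_of_lt_card (hS : S ⊆ Ico 1 p) {m : ℕ} (hm : m < #S) :
    compatibleSum q p S m = 0 := by
  obtain ⟨s, hs⟩ := card_pos.1 (lt_of_le_of_lt (Nat.zero_le m) hm)
  have hp : 0 < p := by have := mem_Ico.1 (hS hs); omega
  rw [compatibleSum, filter_eq_empty_iff.2 fun g hg hcompat => ?_, sum_empty]
  have := hcompat.descentShift_le hS ⟨0, hp⟩
  rw [Fin.val_mk, descentShift_zero fun h => by simpa using hS h] at this
  have := mem_boundedFuns.1 hg ⟨0, hp⟩
  omega

lemma mk_compatibleSum (hS : S ⊆ Ico 1 p) :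
    PowerSeries.mk (compatibleSum q p S) =
      PowerSeries.C (q ^ S.sum id) * PowerSeries.X ^ #S * PowerSeries.mk (antitoneSum q p) := by
  ext n
  rw [mul_comm (PowerSeries.C _), mul_assoc, PowerSeries.coeff_X_pow_mul', PowerSeries.coeff_mk]
  split_ifs with h
  · obtain ⟨m, rfl⟩ := Nat.exists_eq_add_of_le' h
    rw [Nat.add_sub_cancel, compatibleSum_add_card q hS, PowerSeries.coeff_C_mul,
      PowerSeries.coeff_mk]
  · exact compatibleSum_of_lt_card q hS (not_le.1 h)

end compatibleSum

section sorting

variable {p : ℕ}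

def ppKey (f : Fin p → ℕ) (i : Fin p) : ℕᵒᵈ ×ₗ Fin p :=
  toLex (OrderDual.toDual (f i), i)

lemma ppKey_lt_ppKey_iff {f : Fin p → ℕ} {i j : Fin p} :
    ppKey f i < ppKey f j ↔ f j < f i ∨ f i = f j ∧ i < j := by
  simp [ppKey, Prod.Lex.toLex_lt_toLex]

lemma ppKey_injective (f : Fin p → ℕ) : Function.Injective (ppKey f) := fun i j h => by
  simp only [ppKey, EmbeddingLike.apply_eq_iff_eq, Prod.mk.injEq] at h
  exact h.2

lemma eq_sort_ppKey_iff {f : Fin p → ℕ} {π : Equiv.Perm (Fin p)} :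
    π = Tuple.sort (ppKey f) ↔ StrictMono (ppKey f ∘ π) := by
  rw [Tuple.eq_sort_iff]
  refine ⟨fun h => h.1.strictMono_of_injective ((ppKey_injective f).comp π.injective),
    fun h => ⟨h.monotone, fun i j hij heq =>
      absurd (π.injective (ppKey_injective f heq)) hij.ne⟩⟩

end sorting

lemma isLinExt_sort_ppKey_iff {p : ℕ} (P : PartialOrder (Fin p)) (f : Fin p → ℕ) :
    IsLinExt p P (Tuple.sort (ppKey f)) ↔ IsPPartition p P f := by
  set π := Tuple.sort (ppKey f)
  have hπ := (eq_sort_ppKey_iff (f := f) (π := π)).1 rfl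
  constructor
  · intro hlin x y hxy
    have := hπ (hlin (π.symm x) (π.symm y) (by simpa using hxy))
    simp only [Function.comp_apply, Equiv.apply_symm_apply, ppKey_lt_ppKey_iff] at this
    -- `hxy` compares in `P`, but `omega` would read it as the order of `Fin p`.
    clear hxy
    omega
  · intro hf i j hij
    rcases lt_trichotomy i j with hlt | rfl | hgt
    · exact hlt
    · exact absurd hij (@lt_irrefl _ P.toPreorder _)
    · have hkey := hπ hgt
      have hpp := hf _ _ hij
      clear hij
      simp only [Function.comp_apply, ppKey_lt_ppKey_iff] at hkey
      omega

lemma val_succ_mem_desSet_iff {n : ℕ} (g : Fin (n + 1) → ℕ) (i : Fin n) :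
    (i : ℕ) + 1 ∈ desSet (n + 1) g ↔ g i.succ < g i.castSucc := by
  simp [desSet]
  rfl

lemma strictMono_ppKey_comp_iff {p : ℕ} (f : Fin p → ℕ) (π : Equiv.Perm (Fin p)) :
    StrictMono (ppKey f ∘ π) ↔ IsCompatible (desSet p fun k => (π k : ℕ)) (f ∘ π) := by
  cases p with
  | zero => simp [IsCompatible, Subsingleton.strictMono, Subsingleton.antitone]
  | succ n =>
    rw [Fin.strictMono_iff_lt_succ, IsCompatible, Fin.antitone_iff_succ_le]
    refine forall_congr' fun i => ?_
    have hne : π i.castSucc ≠ π i.succ := π.injective.ne Fin.castSucc_lt_succ.ne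
    rw [Fin.val_succ, descentShift_eq_succ_add _ (i.castSucc : ℕ)]
    simp only [Function.comp_apply, ppKey_lt_ppKey_iff, Fin.val_castSucc, val_succ_mem_desSet_iff]
    have := Fin.val_ne_of_ne hne
    split_ifs <;> push_cast <;> omega

lemma desSet_subset_Ico (p : ℕ) (f : Fin p → ℕ) : desSet p f ⊆ Ico 1 p := filter_subset _ _

lemma sum_filter_sort_ppKey_eq [CommSemiring R] (q : R) {p : ℕ} (π : Equiv.Perm (Fin p))
    (m : ℕ) :
    ∑ f ∈ (boundedFuns p m).filter (fun f => Tuple.sort (ppKey f) = π), q ^ ∑ i, f i =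
      compatibleSum q p (desSet p fun k => (π k : ℕ)) m := by
  simp_rw [eq_comm (b := π), eq_sort_ppKey_iff, strictMono_ppKey_comp_iff]
  refine sum_nbij' (· ∘ π) (· ∘ π.symm) ?_ ?_ ?_ ?_ ?_
  · intro f hf
    simp only [mem_filter, mem_boundedFuns] at hf ⊢
    exact ⟨fun i => hf.1 _, hf.2⟩
  · intro g hg
    simp only [mem_filter, mem_boundedFuns] at hg ⊢
    refine ⟨fun i => hg.1 _, ?_⟩
    simpa [Function.comp_assoc] using hg.2
  · intro f _
    simp [Function.comp_assoc]
  · intro g _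
    simp [Function.comp_assoc]
  · intro f _
    simp [Equiv.sum_comp]

lemma Upoly_eq_sum_boundedFuns {p : ℕ} (P : PartialOrder (Fin p)) (m : ℕ) :
    Upoly p P m =
      ∑ f ∈ (boundedFuns p m).filter (IsPPartition p P), Polynomial.X ^ ∑ i, f i := by
  refine sum_nbij' (fun σ i => (σ i : ℕ)) (fun f i => Fin.clamp (f i) m) ?_ ?_ ?_ ?_ ?_
  · intro σ hσ
    simp only [mem_filter, mem_univ, true_and, mem_boundedFuns] at hσ ⊢
    exact ⟨fun i => Fin.is_le _, hσ⟩
  · intro f hf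
    simp only [mem_filter, mem_boundedFuns, mem_univ, true_and] at hf ⊢
    simpa [Fin.coe_clamp, hf.1] using hf.2
  · intro σ _
    ext i
    simp [Fin.coe_clamp, Fin.is_le]
  · intro f hf
    ext i
    simp [Fin.coe_clamp, (mem_boundedFuns.1 (mem_filter.1 hf).1) i]
  · intro σ _
    rfl

lemma Upoly_eq_sum_compatibleSum {p : ℕ} (P : PartialOrder (Fin p)) (m : ℕ) :
    Upoly p P m = ∑ π ∈ univ.filter (IsLinExt p P),
      compatibleSum Polynomial.X p (desSet p fun k => (π k : ℕ)) m := by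
  rw [Upoly_eq_sum_boundedFuns, sum_filter]
  calc _ = ∑ f ∈ boundedFuns p m, ∑ π ∈ univ.filter (IsLinExt p P),
        if Tuple.sort (ppKey f) = π then Polynomial.X ^ ∑ i, f i else 0 :=
        sum_congr rfl fun f _ => by simp [isLinExt_sort_ppKey_iff]
    _ = _ := by rw [sum_comm]; simp only [← sum_filter, sum_filter_sort_ppKey_eq]

theorem majdes_generating_function_general (p : ℕ) (P : PartialOrder (Fin p)) :
    (∏ i ∈ Finset.range (p + 1),
        (1 - PowerSeries.C (R := Polynomial ℤ) (Polynomial.X ^ i) * PowerSeries.X)) *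
      PowerSeries.mk (fun m => Upoly p P m) =
    ∑ π ∈ Finset.univ.filter (IsLinExt p P),
      PowerSeries.C (R := Polynomial ℤ)
          (Polynomial.X ^ ((desSet p fun k => ((π k : ℕ))).sum id)) *
        PowerSeries.X ^ (desSet p fun k => ((π k : ℕ))).card := by
  have hU : PowerSeries.mk (fun m => Upoly p P m) = ∑ π ∈ univ.filter (IsLinExt p P),
      PowerSeries.mk (compatibleSum Polynomial.X p (desSet p fun k => (π k : ℕ))) := by
    ext m
    simp [Upoly_eq_sum_compatibleSum]
  rw [hU, mul_sum]
  refine sum_congr rfl fun π _ => ?_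
  rw [mk_compatibleSum _ (desSet_subset_Ico _ _), mul_left_comm,
    prod_one_sub_C_mul_X_mul_mk_antitoneSum, mul_one]

/-- `(∏_{i=0}^{p} (1 − t q^i)) ⬝ ∑_{m≥0} U_m(P) t^m = ∑_{π ∈ L(P)} q^{maj π} t^{des π}`
in `(ℤ[q])[[t]]`. -/
theorem majdes_generating_function (p : ℕ) (hp : 0 < p) (P : PartialOrder (Fin p)) :
    (∏ i ∈ Finset.range (p + 1),
        (1 - PowerSeries.C (R := Polynomial ℤ) (Polynomial.X ^ i) * PowerSeries.X)) *
      PowerSeries.mk (fun m => Upoly p P m) =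
    ∑ π ∈ Finset.univ.filter (IsLinExt p P),
      PowerSeries.C (R := Polynomial ℤ)
          (Polynomial.X ^ ((desSet p fun k => ((π k : ℕ))).sum id)) *
        PowerSeries.X ^ (desSet p fun k => ((π k : ℕ))).card :=
  majdes_generating_function_general p P
end
end

section
/- In the ring of formal power series ℤ[[q]], the identity (∏_{i=1}^{p} (1 − q^i)) · ∑_{n≥0} a_n q^n = ∑_{π ∈ L(P)} q^{maj(π)} holds, where a_n is the (finite) number of P-partitions σ with σ(1)+⋯+σ(p) = n. -/
open scoped Classical

/-- `a_n` : the number of `P`-partitions `σ` with `σ(1)+⋯+σ(p) = n` (all values of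
such a `σ` are automatically at most `n`). -/
noncomputable def numPPartitionsOf (p : ℕ) (P : PartialOrder (Fin p)) (n : ℕ) : ℕ :=
  (Finset.univ.filter (fun σ : Fin p → Fin (n + 1) =>
      IsPPartition p P (fun i => (σ i : ℕ)) ∧ (∑ i, (σ i : ℕ)) = n)).card

/-!
Sort the values of a `P`-partition `σ` decreasingly, breaking ties by increasing label. The
sorting permutation `π` is a linear extension of `P`, and a function `σ` is a `P`-partition
exactly when its sorting permutation is one. So the `P`-partitions are the disjoint union over
`π ∈ L(P)` of the `σ` for which `σ ∘ π` is weakly decreasing and drops strictly after each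
descent of `π`. Those sequences are the tail sums of `δ j + [descent after j]` for arbitrary
`δ : Fin p → ℕ`, and their size is `∑ (j + 1) δ j + maj π`; hence each `π` contributes
`q ^ maj π / ∏_{i=1}^p (1 - q ^ i)`.
-/

open Finset PowerSeries OrderDual

namespace PPartition

section PowerSeries

variable {R : Type*} [CommRing R]

def invOneSubXPow (i : ℕ) : R⟦X⟧ := mk fun n => if i ∣ n then 1 else 0

lemma one_sub_X_pow_mul_invOneSubXPow {i : ℕ} (hi : i ≠ 0) :
    (1 - X ^ i) * (invOneSubXPow i : R⟦X⟧) = 1 := by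
  ext n
  rw [sub_mul, one_mul, map_sub, coeff_X_pow_mul', invOneSubXPow, coeff_mk, coeff_mk, coeff_one]
  rcases Nat.eq_zero_or_pos n with rfl | hn
  · simp [hi]
  by_cases hle : i ≤ n
  · have : i ∣ n - i ↔ i ∣ n := by
      rw [Nat.dvd_sub_self_right, or_iff_left_iff_imp]
      exact fun h => le_antisymm h hle ▸ dvd_rfl
    simp [hle, this, hn.ne']
  · have : ¬ i ∣ n := fun h => hle (Nat.le_of_dvd hn h)
    simp [hle, this, hn.ne']

lemma prod_Icc_one_eq_prod_fin {M : Type*} [CommMonoid M] (f : ℕ → M) (p : ℕ) :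
    ∏ i ∈ Icc 1 p, f i = ∏ j : Fin p, f (j + 1) := by
  rw [Fin.prod_univ_eq_prod_range (fun j => f (j + 1)), range_eq_Ico, prod_Ico_add',
    zero_add, Ico_add_one_right_eq_Icc]

lemma coeff_prod_invOneSubXPow (p k : ℕ) :
    coeff k (∏ i ∈ Icc 1 p, (invOneSubXPow i : R⟦X⟧)) =
      #{l ∈ finsuppAntidiag (univ : Finset (Fin p)) k | ∀ j : Fin p, (j + 1 : ℕ) ∣ l j} := by
  rw [prod_Icc_one_eq_prod_fin, coeff_prod]
  simp only [invOneSubXPow, coeff_mk, prod_boole, sum_boole, mem_univ, true_implies]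

end PowerSeries

variable {p m : ℕ}

section tailSum

def tailSum (g : Fin p → ℕ) (j : Fin p) : ℕ := ∑ i ∈ Ici j, g i

lemma sum_tailSum (g : Fin p → ℕ) : ∑ j, tailSum g j = ∑ i : Fin p, ((i : ℕ) + 1) * g i := by
  unfold tailSum
  rw [sum_comm' (t' := univ) (s' := Iic) (by simp)]
  simp [Fin.card_Iic]

variable (g : Fin (m + 1) → ℕ)

lemma tailSum_castSucc (i : Fin m) : tailSum g i.castSucc = g i.castSucc + tailSum g i.succ := by
  have : Ici i.castSucc = cons i.castSucc (Ici i.succ) (by simp) := by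
    ext j
    simp [le_iff_eq_or_lt (a := i.castSucc), Fin.castSucc_lt_iff_succ_le, eq_comm]
  rw [tailSum, this, sum_cons, tailSum]

lemma tailSum_last : tailSum g (Fin.last m) = g (Fin.last m) := by
  rw [tailSum, ← Fin.top_eq_last, Ici_top, sum_singleton]

lemma tailSum_injective : Function.Injective (tailSum (p := m + 1)) := by
  intro g h hgh
  funext j
  induction j using Fin.lastCases with
  | last => simpa [tailSum_last] using congrFun hgh (Fin.last m)
  | cast i =>
    have h1 := congrFun hgh i.castSucc
    have h2 := congrFun hgh i.succ
    rw [tailSum_castSucc, tailSum_castSucc] at h1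
    omega

lemma exists_eq_tailSum_add_iff (c f : Fin (m + 1) → ℕ) :
    (∃ δ, f = tailSum (δ + c)) ↔
      (∀ i : Fin m, f i.succ + c i.castSucc ≤ f i.castSucc) ∧ c (Fin.last m) ≤ f (Fin.last m) := by
  constructor
  · rintro ⟨δ, rfl⟩
    refine ⟨fun i => ?_, ?_⟩
    · rw [tailSum_castSucc, Pi.add_apply]; omega
    · rw [tailSum_last, Pi.add_apply]; omega
  · rintro ⟨hsucc, hlast⟩
    refine ⟨Fin.lastCases (f (Fin.last m) - c (Fin.last m))
      (fun i => f i.castSucc - f i.succ - c i.castSucc), funext fun j => ?_⟩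
    induction j using Fin.reverseInduction with
    | last =>
      rw [tailSum_last, Pi.add_apply, Fin.lastCases_last]
      omega
    | cast i ih =>
      rw [tailSum_castSucc, ← ih, Pi.add_apply, Fin.lastCases_castSucc]
      have := hsucc i
      omega

end tailSum

lemma graphEquiv₁_lt_graphEquiv₁_iff (σ : Fin p → ℕ) {i j : Fin p} (hij : i ≠ j) :
    Tuple.graphEquiv₁ (toDual ∘ σ) i < Tuple.graphEquiv₁ (toDual ∘ σ) j ↔
      σ j ≤ σ i ∧ (j < i → σ j < σ i) := by
  change toLex (toDual (σ i), i) < toLex (toDual (σ j), j) ↔ _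
  rw [Prod.Lex.toLex_lt_toLex, toDual_lt_toDual, toDual_inj]
  rw [Fin.ne_iff_vne] at hij
  simp only [Fin.lt_def]
  omega

/- Stated for a relation `r` because a `PartialOrder (Fin p)` argument would become a local
instance and take over `<` on `Fin p` in the proof. -/
lemma forall_rel_iff_forall_rel_sort {r : Fin p → Fin p → Prop} (hr : ∀ i, ¬ r i i)
    (σ : Fin p → ℕ) :
    (∀ i j, r i j → σ j ≤ σ i ∧ (j < i → σ j < σ i)) ↔
      ∀ a b, r (Tuple.sort (toDual ∘ σ) a) (Tuple.sort (toDual ∘ σ) b) → a < b := by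
  set π := Tuple.sort (toDual ∘ σ)
  have hπ : StrictMono (π.trans (Tuple.graphEquiv₁ (toDual ∘ σ))) := Tuple.eq_sort_iff'.1 rfl
  rw [forall₂_congr fun i j => imp_congr_right fun hij =>
    (graphEquiv₁_lt_graphEquiv₁_iff σ (by rintro rfl; exact hr i hij)).symm]
  refine ⟨fun h a b hab => hπ.lt_iff_lt.1 (h _ _ hab), fun h i j hij => ?_⟩
  simpa using hπ (h (π.symm i) (π.symm j) (by simpa using hij))

lemma isPPartition_iff_isLinExt_sort (P : PartialOrder (Fin p)) (σ : Fin p → ℕ) :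
    IsPPartition p P σ ↔ IsLinExt p P (Tuple.sort (toDual ∘ σ)) :=
  forall_rel_iff_forall_rel_sort (fun i => lt_irrefl i) σ

def Compatible (π : Equiv.Perm (Fin p)) (f : Fin p → ℕ) : Prop :=
  StrictMono fun j => toLex (toDual (f j), π j)

lemma sort_eq_iff_compatible (σ : Fin p → ℕ) (π : Equiv.Perm (Fin p)) :
    Tuple.sort (toDual ∘ σ) = π ↔ Compatible π (σ ∘ π) :=
  eq_comm.trans Tuple.eq_sort_iff'

def maj (π : Equiv.Perm (Fin p)) : ℕ := (desSet p fun k => (π k : ℕ)).sum id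

/- `desSet` numbers positions from `1`, so the 0-based position `j` is followed by a descent iff
`j + 1 ∈ desSet`. -/
def desInd (π : Equiv.Perm (Fin p)) (j : Fin p) : ℕ :=
  if (j : ℕ) + 1 ∈ desSet p (fun k => (π k : ℕ)) then 1 else 0

lemma desSet_subset_Ico (f : Fin p → ℕ) : desSet p f ⊆ Ico 1 p := filter_subset _ _

lemma sum_mul_desInd (π : Equiv.Perm (Fin p)) :
    ∑ j : Fin p, ((j : ℕ) + 1) * desInd π j = maj π := by
  set D := desSet p fun k => (π k : ℕ)
  have hshift := sum_range_succ' (fun k => if k ∈ D then k else 0) p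
  rw [ite_self, add_zero] at hshift
  have hD : D ⊆ range (p + 1) := fun k hk => by
    have := mem_Ico.1 (desSet_subset_Ico _ hk)
    rw [mem_range]
    omega
  simp only [desInd, mul_boole]
  rw [Fin.sum_univ_eq_sum_range (fun j => if j + 1 ∈ D then j + 1 else 0), ← hshift, sum_ite_mem,
    inter_eq_right.2 hD, maj]
  rfl

lemma succ_mem_desSet_iff (π : Equiv.Perm (Fin (m + 1))) (i : Fin m) :
    (i : ℕ) + 1 ∈ desSet (m + 1) (fun k => (π k : ℕ)) ↔ π i.succ < π i.castSucc := by
  simp only [desSet, mem_filter, mem_Ico, Nat.add_sub_cancel]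
  constructor
  · rintro ⟨-, _, _, h⟩
    exact h
  · intro h
    exact ⟨⟨by omega, by omega⟩, by omega, by omega, h⟩

lemma desInd_last (π : Equiv.Perm (Fin (m + 1))) : desInd π (Fin.last m) = 0 :=
  if_neg fun h => by simpa using (mem_Ico.1 (desSet_subset_Ico _ h)).2

lemma compatible_iff (π : Equiv.Perm (Fin (m + 1))) (f : Fin (m + 1) → ℕ) :
    Compatible π f ↔ ∀ i : Fin m, f i.succ + desInd π i.castSucc ≤ f i.castSucc := by
  rw [Compatible, Fin.strictMono_iff_lt_succ]
  refine forall_congr' fun i => ?_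
  simp only [Prod.Lex.toLex_lt_toLex, toDual_lt_toDual, toDual_inj, desInd, Fin.val_castSucc,
    succ_mem_desSet_iff]
  have := π.injective.ne (Fin.castSucc_lt_succ (i := i)).ne
  rw [Fin.ne_iff_vne] at this
  simp only [Fin.lt_def]
  split_ifs <;> omega

lemma compatible_iff_exists_eq_tailSum (π : Equiv.Perm (Fin (m + 1))) (f : Fin (m + 1) → ℕ) :
    Compatible π f ↔ ∃ δ, f = tailSum (δ + desInd π) := by
  simp [exists_eq_tailSum_add_iff, desInd_last, compatible_iff]

lemma sum_tailSum_add_desInd (π : Equiv.Perm (Fin p)) (δ : Fin p → ℕ) :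
    ∑ j, tailSum (δ + desInd π) j = ∑ j : Fin p, ((j : ℕ) + 1) * δ j + maj π := by
  simp only [sum_tailSum, Pi.add_apply, mul_add, sum_add_distrib, sum_mul_desInd]

lemma card_compatible (π : Equiv.Perm (Fin (m + 1))) (n : ℕ) :
    #{f ∈ Nat.antidiagonalTuple (m + 1) n | Compatible π f} =
      if maj π ≤ n then
        #{l ∈ finsuppAntidiag (univ : Finset (Fin (m + 1))) (n - maj π) |
          ∀ j : Fin (m + 1), (j + 1 : ℕ) ∣ l j}
      else 0 := by
  split_ifs with hmaj
  · symm
    refine card_nbij (fun l => tailSum ((fun j => l j / (j + 1)) + desInd π)) ?_ ?_ ?_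
    · intro l hl
      simp only [coe_filter, Set.mem_ofPred_eq, mem_finsuppAntidiag,
        Nat.mem_antidiagonalTuple] at hl ⊢
      refine ⟨?_, (compatible_iff_exists_eq_tailSum π _).2 ⟨_, rfl⟩⟩
      have hsum : ∑ j, l j = n - maj π := hl.1.1
      simp only [sum_tailSum_add_desInd, Nat.mul_div_cancel' (hl.2 _)]
      omega
    · intro l₁ hl₁ l₂ hl₂ heq
      simp only [coe_filter, Set.mem_ofPred_eq] at hl₁ hl₂
      have hδ := congrFun (add_right_cancel (tailSum_injective heq))
      ext j
      rw [← Nat.mul_div_cancel' (hl₁.2 j), ← Nat.mul_div_cancel' (hl₂.2 j), hδ j]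
    · intro f hf
      simp only [coe_filter, Set.mem_ofPred_eq, Nat.mem_antidiagonalTuple] at hf
      obtain ⟨δ, rfl⟩ := (compatible_iff_exists_eq_tailSum π f).1 hf.2
      have hsum := hf.1
      rw [sum_tailSum_add_desInd] at hsum
      refine ⟨Finsupp.equivFunOnFinite.symm fun j => (j + 1) * δ j, ?_, by simp⟩
      simp only [coe_filter, Set.mem_ofPred_eq, mem_finsuppAntidiag,
        Finsupp.coe_equivFunOnFinite_symm, subset_univ, and_true, dvd_mul_right, implies_true]
      omega
  · rw [card_eq_zero, filter_eq_empty_iff]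
    intro f hf hc
    obtain ⟨δ, rfl⟩ := (compatible_iff_exists_eq_tailSum π f).1 hc
    rw [Nat.mem_antidiagonalTuple, sum_tailSum_add_desInd] at hf
    omega

lemma card_sort_eq_card_compatible (π : Equiv.Perm (Fin p)) (n : ℕ) :
    #{σ ∈ Nat.antidiagonalTuple p n | Tuple.sort (toDual ∘ σ) = π} =
      #{f ∈ Nat.antidiagonalTuple p n | Compatible π f} := by
  refine card_nbij' (· ∘ π) (· ∘ π.symm) ?_ ?_ ?_ ?_
  · intro σ
    simp [Nat.mem_antidiagonalTuple, sort_eq_iff_compatible, Equiv.sum_comp π σ]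
  · intro f
    simp [Nat.mem_antidiagonalTuple, sort_eq_iff_compatible, Function.comp_assoc,
      Equiv.sum_comp π.symm f]
  · intro σ _
    simp [Function.comp_assoc]
  · intro f _
    simp [Function.comp_assoc]

lemma numPPartitionsOf_eq_card (P : PartialOrder (Fin p)) (n : ℕ) :
    numPPartitionsOf p P n = #{σ ∈ Nat.antidiagonalTuple p n | IsPPartition p P σ} := by
  refine card_nbij (fun σ i => (σ i : ℕ)) ?_ ?_ ?_
  · intro σ
    simp [Nat.mem_antidiagonalTuple, and_comm]
  · intro σ _ τ _ h
    funext i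
    exact Fin.ext (congrFun h i)
  · intro f hf
    simp only [coe_filter, Set.mem_ofPred_eq, Nat.mem_antidiagonalTuple] at hf
    have hle (i : Fin p) : f i ≤ n := hf.1 ▸ single_le_sum (by simp) (mem_univ i)
    exact ⟨fun i => ⟨f i, Nat.lt_succ_of_le (hle i)⟩, by simpa [and_comm] using hf, rfl⟩

lemma numPPartitionsOf_eq_sum (P : PartialOrder (Fin p)) (n : ℕ) :
    numPPartitionsOf p P n =
      ∑ π ∈ univ.filter (IsLinExt p P), #{f ∈ Nat.antidiagonalTuple p n | Compatible π f} := by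
  rw [numPPartitionsOf_eq_card, card_eq_sum_card_fiberwise
    (f := fun σ => Tuple.sort (toDual ∘ σ)) (t := univ.filter (IsLinExt p P))]
  · refine sum_congr rfl fun π hπ => ?_
    rw [← card_sort_eq_card_compatible, filter_filter]
    congr 1
    refine filter_congr fun σ _ => and_iff_right_of_imp fun h => ?_
    rw [isPPartition_iff_isLinExt_sort, h]
    exact (mem_filter.1 hπ).2
  · intro σ hσ
    simpa [isPPartition_iff_isLinExt_sort] using (mem_filter.1 hσ).2

end PPartition

open PPartition in
/-- `(∏_{i=1}^{p} (1 − q^i)) ⬝ ∑_{n≥0} a_n q^n = ∑_{π ∈ L(P)} q^{maj π}` in `ℤ[[q]]`. -/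
theorem maj_generating_function (p : ℕ) (hp : 0 < p) (P : PartialOrder (Fin p)) :
    (∏ i ∈ Finset.Icc 1 p, (1 - (PowerSeries.X : PowerSeries ℤ) ^ i)) *
      PowerSeries.mk (fun n => (numPPartitionsOf p P n : ℤ)) =
    ∑ π ∈ Finset.univ.filter (IsLinExt p P),
      (PowerSeries.X : PowerSeries ℤ) ^ ((desSet p fun k => ((π k : ℕ))).sum id) := by
  obtain ⟨m, rfl⟩ := Nat.exists_eq_add_one_of_ne_zero hp.ne'
  have hgen : mk (fun n => (numPPartitionsOf (m + 1) P n : ℤ)) =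
      ∑ π ∈ univ.filter (IsLinExt (m + 1) P), X ^ maj π * ∏ i ∈ Icc 1 (m + 1), invOneSubXPow i := by
    ext n
    simp [numPPartitionsOf_eq_sum, card_compatible, coeff_X_pow_mul', coeff_prod_invOneSubXPow]
  rw [hgen, mul_sum]
  refine sum_congr rfl fun π _ => ?_
  rw [mul_left_comm, ← prod_mul_distrib, prod_eq_one fun i hi =>
    one_sub_X_pow_mul_invOneSubXPow (by rw [mem_Icc] at hi; omega), mul_one, maj]
end

section
/- In the ring of formal power series ℤ[[t]], the identity (1 − t)^{p+1} · ∑_{m≥0} Ω(P; m) t^m = ∑_{π ∈ L(P)} t^{1 + des(π)} holds, where Ω(P; m) denotes the number of P-partitions all of whose values lie in {0, 1, …, m−1} (so Ω(P; 0) = 0). -/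
open scoped Classical

/-- `Ω(P; m)` : the number of `P`-partitions with all values in `{0, 1, …, m-1}`. -/
noncomputable def orderPolyVal (p : ℕ) (P : PartialOrder (Fin p)) (m : ℕ) : ℕ :=
  (Finset.univ.filter (fun σ : Fin p → Fin m =>
      IsPPartition p P fun i => (σ i : ℕ))).card

/-!
Sort a map `σ : [p] → ℕ` by decreasing value, breaking ties by increasing label. The sorting
permutation is a linear extension of `P` exactly when `σ` is a `P`-partition, so the
`P`-partitions split, over `π ∈ L(P)`, into the `π`-compatible maps: those with `σ ∘ π` weakly
decreasing and strictly decreasing at the descents of `π`. Adding to `σ (π k)` the number of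
ascents of `π` after position `k` turns them into the strictly decreasing sequences, so those with
values below `m` number `C(m + p - 1 - des π, p)`, whose generating function is
`t ^ (1 + des π) / (1 - t) ^ (p + 1)`.
-/

open Finset

theorem Tuple.eq_sort_iff_strictMono {p : ℕ} {α : Type*} [LinearOrder α] {f : Fin p → α}
    (hf : Function.Injective f) {π : Equiv.Perm (Fin p)} :
    π = Tuple.sort f ↔ StrictMono (f ∘ π) := by
  rw [Tuple.eq_sort_iff]
  refine ⟨fun h => h.1.strictMono_of_injective (hf.comp π.injective), fun h => ⟨h.monotone, ?_⟩⟩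
  exact fun i j hij heq => absurd (π.injective (hf heq)) hij.ne

section LinearExtension

-- A `PartialOrder (Fin p)` binder is a local instance and would capture `<` on `Fin p`, so the
-- statements involving `P` only compare in `α`, or through `P.lt`.

variable {p : ℕ} {α : Type*} [LinearOrder α] {f : Fin p → α}

theorem isLinExt_sort {P : PartialOrder (Fin p)} (hf : ∀ i j, P.lt i j → f i < f j) :
    IsLinExt p P (Tuple.sort f) :=
  fun _ _ h => (Tuple.monotone_sort f).reflect_lt (hf _ _ h)

theorem lt_of_isLinExt_of_eq_sort {P : PartialOrder (Fin p)} {π : Equiv.Perm (Fin p)}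
    (hπ : IsLinExt p P π) (hf : Function.Injective f) (hsort : π = Tuple.sort f) (i j : Fin p)
    (hij : P.lt i j) : f i < f j := by
  obtain ⟨a, rfl⟩ := π.surjective i
  obtain ⟨b, rfl⟩ := π.surjective j
  exact (Tuple.eq_sort_iff_strictMono hf).1 hsort (hπ a b hij)

end LinearExtension

section SortKey

variable {p : ℕ}

def sortKey (σ : Fin p → ℕ) (i : Fin p) : ℕᵒᵈ ×ₗ Fin p := toLex (OrderDual.toDual (σ i), i)

theorem sortKey_injective (σ : Fin p → ℕ) : Function.Injective (sortKey σ) :=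
  fun _ _ h => congrArg (fun x => (ofLex x).2) h

theorem sortKey_lt_sortKey_iff {σ : Fin p → ℕ} {i j : Fin p} :
    sortKey σ i < sortKey σ j ↔ σ j < σ i ∨ σ i = σ j ∧ i < j := by
  simp [sortKey, Prod.Lex.lt_iff]

theorem sortKey_lt_sortKey_iff_of_ne {σ : Fin p → ℕ} {i j : Fin p} (hij : i ≠ j) :
    sortKey σ i < sortKey σ j ↔ σ j ≤ σ i ∧ (j < i → σ j < σ i) := by
  rw [sortKey_lt_sortKey_iff]
  omega

theorem isLinExt_sort_sortKey {P : PartialOrder (Fin p)} {σ : Fin p → ℕ}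
    (hσ : IsPPartition p P σ) : IsLinExt p P (Tuple.sort (sortKey σ)) :=
  isLinExt_sort fun i j hij =>
    (sortKey_lt_sortKey_iff_of_ne (@ne_of_lt _ P.toPreorder _ _ hij)).2 (hσ i j hij)

theorem isPPartition_of_eq_sort_sortKey {P : PartialOrder (Fin p)} {σ : Fin p → ℕ}
    {π : Equiv.Perm (Fin p)} (hπ : IsLinExt p P π) (hsort : π = Tuple.sort (sortKey σ)) :
    IsPPartition p P σ := fun i j hij =>
  (sortKey_lt_sortKey_iff_of_ne (@ne_of_lt _ P.toPreorder _ _ hij)).1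
    (lt_of_isLinExt_of_eq_sort hπ (sortKey_injective σ) hsort i j hij)

end SortKey

theorem orderPolyVal_eq_sum_card_eq_sort {p : ℕ} (P : PartialOrder (Fin p)) (m : ℕ) :
    orderPolyVal p P m = ∑ π ∈ univ.filter (IsLinExt p P),
      #{σ : Fin p → Fin m | π = Tuple.sort (sortKey (σ ·))} := by
  rw [orderPolyVal, card_eq_sum_card_fiberwise fun σ hσ => mem_filter.2
    ⟨mem_univ _, isLinExt_sort_sortKey (mem_filter.1 hσ).2⟩]
  refine sum_congr rfl fun π hπ => congrArg card ?_
  ext σ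
  simp only [mem_filter, mem_univ, true_and]
  exact ⟨fun ⟨_, hsort⟩ => hsort.symm,
    fun hsort => ⟨isPPartition_of_eq_sort_sortKey (mem_filter.1 hπ).2 hsort, hsort.symm⟩⟩

section Descents

variable {n : ℕ}

theorem desSet_subset_Ioo (p : ℕ) (f : Fin p → ℕ) : desSet p f ⊆ Ioo 0 p := fun i hi => by
  simp only [desSet, mem_filter, mem_Ico] at hi
  simp only [mem_Ioo]
  omega

theorem succ_mem_desSet_iff (f : Fin (n + 1) → ℕ) (k : Fin n) :
    (k : ℕ) + 1 ∈ desSet (n + 1) f ↔ f k.succ < f k.castSucc := by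
  simp [desSet, Fin.succ, Fin.castSucc, Fin.castAdd, Fin.castLE]

def ascentsAfter {p : ℕ} (π : Equiv.Perm (Fin p)) (k : ℕ) : ℕ :=
  #(Ioo k p \ desSet p (π ·))

theorem ascentsAfter_castSucc (π : Equiv.Perm (Fin (n + 1))) (k : Fin n) :
    ascentsAfter π k.castSucc =
      ascentsAfter π k.succ + if π k.succ < π k.castSucc then 0 else 1 := by
  have hIoo : Ioo (k : ℕ) (n + 1) = insert ((k : ℕ) + 1) (Ioo ((k : ℕ) + 1) (n + 1)) := by
    rw [Ioo_insert_left (by omega), Ico_add_one_left_eq_Ioo]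
  have hmem := succ_mem_desSet_iff (fun i => (π i : ℕ)) k
  simp only [ascentsAfter, Fin.val_castSucc, Fin.val_succ, hIoo]
  split_ifs with h
  · rw [insert_sdiff_of_mem _ (hmem.2 h), add_zero]
  · rw [insert_sdiff_of_notMem _ (mt hmem.1 h), card_insert_of_notMem (by simp)]

theorem ascentsAfter_add_le (π : Equiv.Perm (Fin (n + 1))) (k : Fin (n + 1)) :
    ascentsAfter π k + k ≤ n := by
  have := card_le_card (sdiff_subset (s := Ioo (k : ℕ) (n + 1)) (t := desSet (n + 1) (π ·)))
  rw [Nat.card_Ioo] at this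
  unfold ascentsAfter
  omega

theorem ascentsAfter_zero_le (π : Equiv.Perm (Fin (n + 1))) (k : Fin (n + 1)) :
    ascentsAfter π 0 ≤ ascentsAfter π k + k := by
  have hsub : Ioo 0 (n + 1) \ desSet (n + 1) (π ·) ⊆
      Ioc 0 (k : ℕ) ∪ (Ioo (k : ℕ) (n + 1) \ desSet (n + 1) (π ·)) := fun i hi => by
    simp only [mem_sdiff, mem_union, mem_Ioo, mem_Ioc] at hi ⊢
    by_cases hik : i ≤ k
    · exact .inl ⟨hi.1.1, hik⟩
    · exact .inr ⟨⟨by omega, hi.1.2⟩, hi.2⟩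
  have := (card_le_card hsub).trans (card_union_le _ _)
  rw [Nat.card_Ioc, Nat.sub_zero] at this
  unfold ascentsAfter
  omega

theorem ascentsAfter_zero_add_card_desSet (π : Equiv.Perm (Fin (n + 1))) :
    ascentsAfter π 0 + #(desSet (n + 1) (π ·)) = n := by
  rw [ascentsAfter, card_sdiff_of_subset (desSet_subset_Ioo _ _), Nat.card_Ioo,
    Nat.sub_add_cancel (by simpa using card_le_card (desSet_subset_Ioo (n + 1) (π ·)))]
  rfl

theorem eq_sort_sortKey_iff (π : Equiv.Perm (Fin (n + 1))) (σ : Fin (n + 1) → ℕ) :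
    π = Tuple.sort (sortKey σ) ↔ StrictAnti fun k => σ (π k) + ascentsAfter π k := by
  rw [Tuple.eq_sort_iff_strictMono (sortKey_injective σ), Fin.strictMono_iff_lt_succ,
    Fin.strictAnti_iff_succ_lt]
  refine forall_congr' fun k => ?_
  have hne : π k.castSucc ≠ π k.succ := π.injective.ne (Fin.castSucc_lt_succ (i := k)).ne
  rw [Function.comp_apply, Function.comp_apply, sortKey_lt_sortKey_iff, ascentsAfter_castSucc]
  split_ifs with h <;> simp only [Fin.lt_def, ← Fin.val_ne_iff] at h hne ⊢ <;> omega

end Descents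

section Counting

theorem card_strictAnti_fin (p N : ℕ) : #{u : Fin p → Fin N | StrictAnti u} = N.choose p := by
  let e : {u : Fin p → Fin N // StrictAnti u} ≃ (Fin p ↪o (Fin N)ᵒᵈ) :=
    { toFun := fun u => OrderEmbedding.ofStrictMono (OrderDual.toDual ∘ u.1) u.2
      invFun := fun f => ⟨OrderDual.ofDual ∘ f, fun _ _ h => f.strictMono h⟩
      left_inv := fun _ => rfl
      right_inv := fun _ => rfl }
  rw [← Fintype.card_subtype, ← Nat.card_eq_fintype_card,
    Nat.card_congr (e.trans Set.powersetCard.ofFinEmbEquiv), Set.powersetCard.card]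
  simp

variable {n : ℕ}

theorem StrictAnti.antitone_add_val {u : Fin (n + 1) → ℕ} (hu : StrictAnti u) :
    Antitone fun k => u k + k :=
  Fin.antitone_iff_succ_le.2 fun k => by
    have := hu (Fin.castSucc_lt_succ (i := k))
    simp only [Fin.val_succ, Fin.val_castSucc]
    omega

theorem card_strictAnti_add (g : Fin (n + 1) → ℕ) (hg : ∀ k, g k + k ≤ n)
    (hg0 : ∀ k, g 0 ≤ g k + k) (m : ℕ) :
    #{a : Fin (n + 1) → Fin m | StrictAnti fun k => (a k : ℕ) + g k} =
      (m + g 0).choose (n + 1) := by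
  have hbound (u : Fin (n + 1) → Fin (m + g 0)) (hu : StrictAnti u) (k : Fin (n + 1)) :
      g k ≤ u k ∧ u k - g k < m := by
    have hu' := StrictAnti.antitone_add_val (u := fun k => (u k : ℕ)) hu
    have h0 := hu' (Fin.zero_le k)
    have hlast := hu' (Fin.le_last k)
    have := (u 0).isLt
    simp only [Fin.val_zero, Fin.val_last] at h0 hlast
    have := hg k
    have := hg0 k
    omega
  rw [← card_strictAnti_fin]
  refine card_bij' (fun a ha k => ⟨a k + g k, ?_⟩)
    (fun u hu k => ⟨u k - g k, (hbound u (mem_filter.1 hu).2 k).2⟩) ?_ ?_ ?_ ?_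
  · have := (mem_filter.1 ha).2.antitone (Fin.zero_le k)
    have := (a 0).isLt
    omega
  · exact fun a ha => mem_filter.2 ⟨mem_univ _, (mem_filter.1 ha).2⟩
  · intro u hu
    refine mem_filter.2 ⟨mem_univ _, fun i j hij => ?_⟩
    simp only [Nat.sub_add_cancel (hbound u (mem_filter.1 hu).2 _).1]
    exact (mem_filter.1 hu).2 hij
  · exact fun a _ => funext fun k => Fin.ext (Nat.add_sub_cancel _ _)
  · exact fun u hu => funext fun k =>
      Fin.ext (Nat.sub_add_cancel (hbound u (mem_filter.1 hu).2 k).1)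

end Counting

theorem card_eq_sort_sortKey {n : ℕ} (π : Equiv.Perm (Fin (n + 1))) (m : ℕ) :
    #{σ : Fin (n + 1) → Fin m | π = Tuple.sort (sortKey (σ ·))} =
      (m + ascentsAfter π 0).choose (n + 1) := by
  refine Eq.trans ?_ (card_strictAnti_add (fun k => ascentsAfter π k) (ascentsAfter_add_le π)
    (ascentsAfter_zero_le π) m)
  refine card_nbij' (· ∘ π) (· ∘ π.symm) (fun σ hσ => ?_) (fun a ha => ?_)
    (fun σ _ => ?_) (fun a _ => ?_) <;>
    simp_all [eq_sort_sortKey_iff, Function.comp_def]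

open PowerSeries in
theorem one_sub_pow_mul_mk_choose_add {R : Type*} [CommRing R] {n c : ℕ} (hc : c ≤ n) :
    (1 - X : R⟦X⟧) ^ (n + 2) * mk (fun m => ((m + c).choose (n + 1) : R)) = X ^ (n + 1 - c) := by
  have hmk : mk (fun m => ((m + c).choose (n + 1) : R)) =
      X ^ (n + 1 - c) * (invOneSubPow R (n + 2)).val := by
    ext m
    rw [coeff_mk, invOneSubPow_val_succ_eq_mk_add_choose, coeff_X_pow_mul', coeff_mk]
    split_ifs with hm
    · congr 2
      omega
    · rw [Nat.choose_eq_zero_of_lt (by omega), Nat.cast_zero]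
  rw [hmk, mul_left_comm, ← invOneSubPow_inv_eq_one_sub_pow, (invOneSubPow R (n + 2)).inv_val,
    mul_one]

/-- `(1 − t)^{p+1} ⬝ ∑_{m≥0} Ω(P; m) t^m = ∑_{π ∈ L(P)} t^{1 + des π}` in `ℤ[[t]]`. -/
theorem order_polynomial_generating_function (p : ℕ) (hp : 0 < p)
    (P : PartialOrder (Fin p)) :
    (1 - (PowerSeries.X : PowerSeries ℤ)) ^ (p + 1) *
      PowerSeries.mk (fun m => (orderPolyVal p P m : ℤ)) =
    ∑ π ∈ Finset.univ.filter (IsLinExt p P),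
      (PowerSeries.X : PowerSeries ℤ) ^ (1 + (desSet p fun k => ((π k : ℕ))).card) := by
  obtain ⟨n, rfl⟩ := Nat.exists_eq_add_one_of_ne_zero hp.ne'
  have hseries : PowerSeries.mk (fun m => (orderPolyVal (n + 1) P m : ℤ)) =
      ∑ π ∈ univ.filter (IsLinExt (n + 1) P),
        PowerSeries.mk fun m => (((m + ascentsAfter π 0).choose (n + 1) : ℕ) : ℤ) := by
    ext m
    simp [orderPolyVal_eq_sum_card_eq_sort, card_eq_sort_sortKey, map_sum]
  rw [hseries, mul_sum]
  refine sum_congr rfl fun π _ => ?_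
  have hcard := ascentsAfter_zero_add_card_desSet π
  rw [one_sub_pow_mul_mk_choose_add (by omega)]
  congr 1
  omega
end

section
/- (Stanley's acyclic orientation theorem.) Let G be a finite simple graph with n vertices, and suppose χ ∈ ℚ[X] is a polynomial such that for every natural number k, χ(k) equals the number of proper colorings of G with colors {1,…,k}. Then (−1)^n · χ(−1) equals the number of acyclic orientations of G. -/
/-!
Deletion–contraction. For an edge `uv`, a proper colouring of `G - uv` either separates `u`
and `v` (a proper colouring of `G`) or not (a proper colouring of `G / uv`), so
`χ_G = χ_{G - uv} - χ_{G / uv}`. Acyclic orientations of `G` with `u → v` are those of `G - uv`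
without a path `v ⇝ u` (plus the arc), and those of `G - uv` with no path between `u` and `v`
correspond to acyclic orientations of `G / uv`; inclusion–exclusion gives
`a(G) = a(G - uv) + a(G / uv)`. Since `G / uv` has one vertex less, `(-1)^n χ(-1)` obeys the
same recursion, and both equal `1` on edgeless graphs, where `χ = X^n`.
-/

open scoped Classical
open Finset Relation

namespace Relation

variable {α β : Type*} {r : α → α → Prop}

theorem TransGen.cases_or_arc {u v a b : α}
    (h : TransGen (fun x y => r x y ∨ x = u ∧ y = v) a b) :
    TransGen r a b ∨ ReflTransGen r a u ∧ ReflTransGen r v b := by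
  induction h with
  | single h =>
    obtain h | ⟨rfl, rfl⟩ := h
    · exact .inl (.single h)
    · exact .inr ⟨.refl, .refl⟩
  | tail _ h ih =>
    obtain h | ⟨rfl, rfl⟩ := h
    · exact ih.imp (·.tail h) fun ⟨hau, hvb⟩ => ⟨hau, hvb.tail h⟩
    · exact .inr ⟨ih.elim TransGen.to_reflTransGen And.left, .refl⟩

theorem not_transGen_or_arc_self {u v : α} (hr : ∀ a, ¬ TransGen r a a)
    (hvu : ¬ ReflTransGen r v u) (a : α) :
    ¬ TransGen (fun x y => r x y ∨ x = u ∧ y = v) a a := fun h =>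
  (TransGen.cases_or_arc h).elim (hr a) fun ⟨hau, hva⟩ => hvu (hva.trans hau)

theorem not_transGen_map_self {f : α → β} {S : Set α} (hr : ∀ a, ¬ TransGen r a a)
    (hS : ∀ a ∈ S, ∀ b ∈ S, ¬ TransGen r a b)
    (hf : ∀ a b, f a = f b → a = b ∨ a ∈ S ∧ b ∈ S) (x : β) :
    ¬ TransGen (Relation.Map r f f) x x := by
  -- A lifted path may jump between two points of `S` at most once, as `S` is an antichain.
  have lift {x y} (h : TransGen (Relation.Map r f f) x y) : ∃ a b, f a = x ∧ f b = y ∧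
      (TransGen r a b ∨ ∃ s ∈ S, ReflTransGen r a s ∧ ∃ t ∈ S, TransGen r t b) := by
    induction h with
    | single h =>
      obtain ⟨a, b, hab, rfl, rfl⟩ := h
      exact ⟨a, b, rfl, rfl, .inl (.single hab)⟩
    | tail _ h ih =>
      obtain ⟨a, b, rfl, hb, hpath⟩ := ih
      obtain ⟨c, d, hcd, hc, rfl⟩ := h
      refine ⟨a, d, rfl, rfl, ?_⟩
      obtain rfl | ⟨hbS, hcS⟩ := hf b c (hb.trans hc.symm)
      · exact hpath.imp (·.tail hcd) fun ⟨s, hs, has, t, ht, htb⟩ =>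
          ⟨s, hs, has, t, ht, htb.tail hcd⟩
      · obtain hab | ⟨s, hs, _, t, ht, htb⟩ := hpath
        · exact .inr ⟨b, hbS, hab.to_reflTransGen, c, hcS, .single hcd⟩
        · exact (hS t ht b hbS htb).elim
  intro h
  obtain ⟨a, b, rfl, hba, hpath⟩ := lift h
  obtain rfl | ⟨hbS, haS⟩ := hf b a hba
  · obtain hbb | ⟨s, hs, hbs, t, ht, htb⟩ := hpath
    · exact hr b hbb
    · exact hS t ht s hs (htb.trans_left hbs)
  · obtain hab | ⟨s, hs, -, t, ht, htb⟩ := hpath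
    · exact hS a haS b hbS hab
    · exact hS t ht b hbS htb

end Relation

namespace SimpleGraph

variable {V : Type*} (G : SimpleGraph V)

def IsAcyclicOrientation (r : V → V → Prop) : Prop :=
  (∀ u v, r u v → G.Adj u v) ∧ (∀ u v, G.Adj u v → (r u v ↔ ¬ r v u)) ∧
    ∀ v, ¬ TransGen r v v

variable {G} {r : V → V → Prop} {u v : V}

theorem IsAcyclicOrientation.mk' (hadj : ∀ a b, r a b → G.Adj a b)
    (htotal : ∀ a b, G.Adj a b → r a b ∨ r b a) (hacyc : ∀ a, ¬ TransGen r a a) :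
    G.IsAcyclicOrientation r :=
  ⟨hadj, fun a b hab =>
    ⟨fun h h' => hacyc a (.tail (.single h) h'), (htotal a b hab).resolve_right⟩, hacyc⟩

namespace IsAcyclicOrientation

variable (h : G.IsAcyclicOrientation r) {a b : V}
include h

theorem adj (hab : r a b) : G.Adj a b := h.1 a b hab

theorem not_transGen_self (a : V) : ¬ TransGen r a a := h.2.2 a

theorem asymm (hab : r a b) : ¬ r b a := (h.2.1 a b (h.adj hab)).1 hab

theorem total (hab : G.Adj a b) : r a b ∨ r b a := by
  by_contra! hc
  exact hc.1 ((h.2.1 a b hab).2 hc.2)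

end IsAcyclicOrientation

theorem deleteEdges_singleton_adj {a b : V} : (G.deleteEdges {s(u, v)}).Adj a b ↔
    G.Adj a b ∧ ¬ ((a = u ∧ b = v) ∨ (a = v ∧ b = u)) := by
  simp

theorem deleteEdges_singleton_lt (huv : G.Adj u v) : G.deleteEdges {s(u, v)} < G :=
  lt_of_le_of_ne (deleteEdges_le _) fun h =>
    Set.disjoint_singleton_right.1 (deleteEdges_eq_self.1 h) huv

section contractEdge

variable [DecidableEq V] (hne : u ≠ v)

def mergeVertex (a : V) : {x // x ≠ v} :=
  if h : a = v then ⟨u, hne⟩ else ⟨a, h⟩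

variable (G) in
def contractEdge : SimpleGraph {x // x ≠ v} :=
  fromRel (Relation.Map (G.deleteEdges {s(u, v)}).Adj (mergeVertex hne) (mergeVertex hne))

theorem val_mergeVertex (a : V) : (mergeVertex hne a : V) = if a = v then u else a := by
  unfold mergeVertex
  split_ifs <;> rfl

theorem mergeVertex_val (x : {x // x ≠ v}) : mergeVertex hne x = x := by
  simp [mergeVertex, x.2]

theorem mergeVertex_right_eq_left : mergeVertex hne v = mergeVertex hne u := by
  simp [mergeVertex, hne]

theorem apply_mergeVertex {β : Type*} {c : V → β} (hc : c u = c v) (a : V) :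
    c (mergeVertex hne a) = c a := by
  rw [val_mergeVertex]
  split_ifs with ha
  exacts [ha ▸ hc, rfl]

theorem eq_or_mem_of_mergeVertex_eq {a b : V} (h : mergeVertex hne a = mergeVertex hne b) :
    a = b ∨ a ∈ ({u, v} : Set V) ∧ b ∈ ({u, v} : Set V) := by
  rw [Subtype.ext_iff, val_mergeVertex, val_mergeVertex] at h
  split_ifs at h <;> simp_all

theorem mergeVertex_ne_of_adj {a b : V} (h : (G.deleteEdges {s(u, v)}).Adj a b) :
    mergeVertex hne a ≠ mergeVertex hne b := fun he => by
  rw [deleteEdges_singleton_adj] at h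
  obtain rfl | ⟨ha, hb⟩ := eq_or_mem_of_mergeVertex_eq hne he
  · exact h.1.ne rfl
  · simp only [Set.mem_insert_iff, Set.mem_singleton_iff] at ha hb
    obtain rfl | rfl := ha <;> obtain rfl | rfl := hb <;> simp_all

theorem contractEdge_adj_mergeVertex {a b : V} (h : (G.deleteEdges {s(u, v)}).Adj a b) :
    (G.contractEdge hne).Adj (mergeVertex hne a) (mergeVertex hne b) :=
  ⟨mergeVertex_ne_of_adj hne h, .inl ⟨a, b, h, rfl, rfl⟩⟩

theorem exists_of_contractEdge_adj {x y : {x // x ≠ v}} (h : (G.contractEdge hne).Adj x y) :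
    ∃ a b, (G.deleteEdges {s(u, v)}).Adj a b ∧
      mergeVertex hne a = x ∧ mergeVertex hne b = y := by
  obtain ⟨-, ⟨a, b, hab, rfl, rfl⟩ | ⟨b, a, hba, rfl, rfl⟩⟩ := h
  exacts [⟨a, b, hab, rfl, rfl⟩, ⟨a, b, hba.symm, rfl, rfl⟩]

theorem IsAcyclicOrientation.map_mergeVertex
    (hr : (G.deleteEdges {s(u, v)}).IsAcyclicOrientation r)
    (huv : ¬ TransGen r u v) (hvu : ¬ TransGen r v u) :
    (G.contractEdge hne).IsAcyclicOrientation
      (Relation.Map r (mergeVertex hne) (mergeVertex hne)) := by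
  refine .mk' ?_ ?_ (not_transGen_map_self hr.not_transGen_self ?_
    fun a b => eq_or_mem_of_mergeVertex_eq hne)
  · rintro _ _ ⟨a, b, hab, rfl, rfl⟩
    exact contractEdge_adj_mergeVertex hne (hr.adj hab)
  · intro x y hxy
    obtain ⟨a, b, hab, rfl, rfl⟩ := exists_of_contractEdge_adj hne hxy
    exact (hr.total hab).imp (⟨a, b, ·, rfl, rfl⟩) (⟨b, a, ·, rfl, rfl⟩)
  · simp only [Set.mem_insert_iff, Set.mem_singleton_iff]
    rintro a (rfl | rfl) b (rfl | rfl)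
    exacts [hr.not_transGen_self _, huv, hvu, hr.not_transGen_self _]

end contractEdge

variable [Fintype V] [DecidableEq V]

section properColorings

variable (α : Type*) [Fintype α] [DecidableEq α]

variable (G) in
noncomputable def properColorings : Finset (V → α) :=
  univ.filter fun c => ∀ a b, G.Adj a b → c a ≠ c b

@[simp] theorem mem_properColorings {c : V → α} :
    c ∈ G.properColorings α ↔ ∀ a b, G.Adj a b → c a ≠ c b := by
  simp [properColorings]

theorem filter_properColorings_deleteEdges_ne (huv : G.Adj u v) :
    ((G.deleteEdges {s(u, v)}).properColorings α).filter (fun c => c u ≠ c v) =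
      G.properColorings α := by
  ext c
  simp only [mem_filter, mem_properColorings, deleteEdges_singleton_adj]
  refine ⟨fun ⟨hc, hcuv⟩ a b hab => ?_,
    fun hc => ⟨fun a b hab => hc a b hab.1, hc u v huv⟩⟩
  by_cases h : (a = u ∧ b = v) ∨ (a = v ∧ b = u)
  · obtain ⟨rfl, rfl⟩ | ⟨rfl, rfl⟩ := h
    exacts [hcuv, hcuv.symm]
  · exact hc a b ⟨hab, h⟩

theorem card_filter_properColorings_deleteEdges_eq (hne : u ≠ v) :
    #(((G.deleteEdges {s(u, v)}).properColorings α).filter (fun c => c u = c v)) =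
      #((G.contractEdge hne).properColorings α) := by
  refine card_nbij' (fun c x => c x) (fun c => c ∘ mergeVertex hne) ?_ ?_ ?_ ?_
  · rintro c hc
    simp only [mem_coe, mem_filter, mem_properColorings] at hc ⊢
    intro x y hxy
    obtain ⟨a, b, hab, rfl, rfl⟩ := exists_of_contractEdge_adj hne hxy
    rw [apply_mergeVertex hne hc.2, apply_mergeVertex hne hc.2]
    exact hc.1 a b hab
  · rintro c hc
    simp only [mem_coe, mem_filter, mem_properColorings, Function.comp_apply] at hc ⊢
    exact ⟨fun a b hab => hc _ _ (contractEdge_adj_mergeVertex hne hab),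
      congrArg c (mergeVertex_right_eq_left hne).symm⟩
  · rintro c hc
    exact funext (apply_mergeVertex hne (mem_filter.1 hc).2)
  · rintro c -
    exact funext fun x => congrArg c (mergeVertex_val hne x)

theorem card_properColorings_deleteEdges (huv : G.Adj u v) :
    #((G.deleteEdges {s(u, v)}).properColorings α) =
      #(G.properColorings α) + #((G.contractEdge huv.ne).properColorings α) := by
  rw [← card_filter_properColorings_deleteEdges_eq α huv.ne,
    ← filter_properColorings_deleteEdges_ne α huv, add_comm, card_filter_add_card_filter_not]

theorem card_properColorings_bot :
    #((⊥ : SimpleGraph V).properColorings α) = Fintype.card α ^ Fintype.card V := by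
  simp [properColorings]

end properColorings

section acyclicOrientations

variable (G) in
noncomputable def acyclicOrientations : Finset (V → V → Prop) :=
  univ.filter G.IsAcyclicOrientation

@[simp] theorem mem_acyclicOrientations :
    r ∈ G.acyclicOrientations ↔ G.IsAcyclicOrientation r := by
  simp [acyclicOrientations]

theorem card_filter_acyclicOrientations_apply (huv : G.Adj u v) :
    #(G.acyclicOrientations.filter (· u v)) =
      #((G.deleteEdges {s(u, v)}).acyclicOrientations.filter fun r => ¬ TransGen r v u) := by
  set H := G.deleteEdges {s(u, v)}
  refine card_nbij' (fun r a b => H.Adj a b ∧ r a b) (fun r a b => r a b ∨ a = u ∧ b = v)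
    ?_ ?_ ?_ ?_
  · rintro r hr
    simp only [mem_coe, mem_filter, mem_acyclicOrientations] at hr ⊢
    obtain ⟨hr, hruv⟩ := hr
    have restrict {a b} (h : TransGen (fun a b => H.Adj a b ∧ r a b) a b) : TransGen r a b :=
      TransGen.mono (fun _ _ => And.right) _ _ h
    refine ⟨.mk' (fun a b h => h.1) (fun a b hab => ?_)
      (fun a h => hr.not_transGen_self a (restrict h)),
      fun h => hr.not_transGen_self u ((restrict h).head hruv)⟩
    exact (hr.total (deleteEdges_le _ hab)).imp (⟨hab, ·⟩) (⟨hab.symm, ·⟩)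
  · rintro r hr
    simp only [mem_coe, mem_filter, mem_acyclicOrientations] at hr ⊢
    obtain ⟨hr, hvu⟩ := hr
    refine ⟨.mk' ?_ ?_ (not_transGen_or_arc_self hr.not_transGen_self ?_), by simp⟩
    · rintro a b (h | ⟨rfl, rfl⟩)
      exacts [deleteEdges_le _ (hr.adj h), huv]
    · intro a b hab
      by_cases h : H.Adj a b
      · exact (hr.total h).imp .inl .inl
      · rw [deleteEdges_singleton_adj, not_and_not_right] at h
        obtain ⟨rfl, rfl⟩ | ⟨rfl, rfl⟩ := h hab
        exacts [.inl (.inr ⟨rfl, rfl⟩), .inr (.inr ⟨rfl, rfl⟩)]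
    · rw [reflTransGen_iff_eq_or_transGen]
      rintro (h | h)
      exacts [huv.ne h, hvu h]
  · rintro r hr
    simp only [mem_coe, mem_filter, mem_acyclicOrientations] at hr
    ext a b
    refine ⟨?_, fun h => ?_⟩
    · rintro (h | ⟨rfl, rfl⟩)
      exacts [h.2, hr.2]
    · by_cases hd : H.Adj a b
      · exact .inl ⟨hd, h⟩
      · rw [deleteEdges_singleton_adj, not_and_not_right] at hd
        obtain ⟨rfl, rfl⟩ | ⟨rfl, rfl⟩ := hd (hr.1.adj h)
        exacts [.inr ⟨rfl, rfl⟩, (hr.1.asymm hr.2 h).elim]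
  · rintro r hr
    simp only [mem_coe, mem_filter, mem_acyclicOrientations] at hr
    ext a b
    refine ⟨?_, fun h => ⟨hr.1.adj h, .inl h⟩⟩
    rintro ⟨hd, h | ⟨rfl, rfl⟩⟩
    exacts [h, (by simp [H] at hd)]

theorem card_acyclicOrientations_contractEdge (hne : u ≠ v) :
    #(G.contractEdge hne).acyclicOrientations =
      #((G.deleteEdges {s(u, v)}).acyclicOrientations.filter
        fun r => ¬ TransGen r v u ∧ ¬ TransGen r u v) := by
  set f := mergeVertex hne
  set H := G.deleteEdges {s(u, v)}
  have hf : f v = f u := mergeVertex_right_eq_left hne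
  have lift {r : {x // x ≠ v} → {x // x ≠ v} → Prop} {a b : V}
      (h : TransGen (fun a b => H.Adj a b ∧ r (f a) (f b)) a b) : TransGen r (f a) (f b) :=
    h.lift f fun _ _ => And.right
  refine card_nbij' (fun r a b => H.Adj a b ∧ r (f a) (f b)) (fun r => Relation.Map r f f)
    ?_ ?_ ?_ ?_
  · rintro r hr
    simp only [mem_coe, mem_filter, mem_acyclicOrientations] at hr ⊢
    refine ⟨.mk' (fun a b h => h.1) (fun a b hab => ?_)
      (fun a h => hr.not_transGen_self _ (lift h)),
      fun h => hr.not_transGen_self _ (hf ▸ lift h),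
      fun h => hr.not_transGen_self _ (hf ▸ lift h)⟩
    exact (hr.total (contractEdge_adj_mergeVertex hne hab)).imp (⟨hab, ·⟩) (⟨hab.symm, ·⟩)
  · rintro r hr
    simp only [mem_coe, mem_filter, mem_acyclicOrientations] at hr ⊢
    exact hr.1.map_mergeVertex hne hr.2.2 hr.2.1
  · rintro r hr
    simp only [mem_coe, mem_acyclicOrientations] at hr
    ext x y
    refine ⟨fun ⟨a, b, ⟨_, h⟩, hx, hy⟩ => hx ▸ hy ▸ h, fun h => ?_⟩
    obtain ⟨a, b, hab, rfl, rfl⟩ := exists_of_contractEdge_adj hne (hr.adj h)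
    exact ⟨a, b, ⟨hab, h⟩, rfl, rfl⟩
  · rintro r hr
    simp only [mem_coe, mem_filter, mem_acyclicOrientations] at hr
    have hmap := hr.1.map_mergeVertex hne hr.2.2 hr.2.1
    ext a b
    refine ⟨fun ⟨hab, h⟩ => (hr.1.total hab).resolve_right fun hba => hmap.asymm h ?_,
      fun h => ⟨hr.1.adj h, a, b, h, rfl, rfl⟩⟩
    exact ⟨b, a, hba, rfl, rfl⟩

theorem card_acyclicOrientations_eq_deleteEdges_add_contractEdge (huv : G.Adj u v) :
    #G.acyclicOrientations = #(G.deleteEdges {s(u, v)}).acyclicOrientations +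
      #(G.contractEdge huv.ne).acyclicOrientations := by
  set H := G.deleteEdges {s(u, v)}
  have hH : G.deleteEdges {s(v, u)} = H := by rw [Sym2.eq_swap]
  have hsplit : G.acyclicOrientations.filter (¬ · u v) = G.acyclicOrientations.filter (· v u) :=
    filter_congr fun r hr => ⟨((mem_acyclicOrientations.1 hr).total huv).resolve_left,
      (mem_acyclicOrientations.1 hr).asymm⟩
  have hunion : H.acyclicOrientations.filter (fun r => ¬ TransGen r v u) ∪
      H.acyclicOrientations.filter (fun r => ¬ TransGen r u v) = H.acyclicOrientations := by
    rw [← filter_or]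
    exact filter_true_of_mem fun r hr => not_and_or.1 fun h =>
      (mem_acyclicOrientations.1 hr).not_transGen_self u (h.2.trans h.1)
  rw [← card_filter_add_card_filter_not (p := (· u v)), hsplit,
    card_filter_acyclicOrientations_apply huv, card_filter_acyclicOrientations_apply huv.symm, hH,
    ← card_union_add_card_inter, hunion, ← filter_and, card_acyclicOrientations_contractEdge]

theorem acyclicOrientations_bot :
    (⊥ : SimpleGraph V).acyclicOrientations = {fun _ _ => False} := by
  ext r
  simp only [mem_acyclicOrientations, mem_singleton]
  refine ⟨fun hr => funext₂ fun a b => propext (iff_false_intro (hr.adj ·)), ?_⟩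
  rintro rfl
  refine .mk' (fun _ _ => False.elim) (fun _ _ => False.elim) fun a h => ?_
  obtain ⟨_, h, _⟩ := TransGen.head'_iff.1 h
  exact h

theorem card_acyclicOrientations_eq_card_filter_bool :
    #G.acyclicOrientations =
      #(univ.filter fun o : V → V → Bool => G.IsAcyclicOrientation fun a b => o a b = true) :=
  card_nbij' (fun r a b => decide (r a b)) (fun o a b => o a b = true) (by intro r; simp)
    (by intro o; simp) (by intro r _; simp) (by intro o _; simp)

end acyclicOrientations

open Polynomial

section chromaticPolynomial

variable {χ ψ χ₁ χ₂ : ℚ[X]}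

variable (G) in
def IsChromaticPolynomial (χ : ℚ[X]) : Prop :=
  ∀ k : ℕ, χ.eval (k : ℚ) = #(G.properColorings (Fin k))

theorem IsChromaticPolynomial.unique (hχ : G.IsChromaticPolynomial χ)
    (hψ : G.IsChromaticPolynomial ψ) : χ = ψ :=
  eq_of_infinite_eval_eq χ ψ <| Set.infinite_of_injective_forall_mem Nat.cast_injective
    fun k => (hχ k).trans (hψ k).symm

theorem IsChromaticPolynomial.sub (huv : G.Adj u v)
    (h₁ : (G.deleteEdges {s(u, v)}).IsChromaticPolynomial χ₁)
    (h₂ : (G.contractEdge huv.ne).IsChromaticPolynomial χ₂) :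
    G.IsChromaticPolynomial (χ₁ - χ₂) := fun k => by
  rw [eval_sub, h₁ k, h₂ k, card_properColorings_deleteEdges _ huv]
  push_cast
  ring

theorem isChromaticPolynomial_bot :
    (⊥ : SimpleGraph V).IsChromaticPolynomial (X ^ Fintype.card V) := fun k => by
  simp [card_properColorings_bot]

end chromaticPolynomial

variable (G) in
theorem exists_isChromaticPolynomial_eval_neg_one :
    ∃ χ : ℚ[X], G.IsChromaticPolynomial χ ∧
      (-1) ^ Fintype.card V * χ.eval (-1) = #G.acyclicOrientations := by
  obtain ⟨n, hn⟩ : ∃ n, Fintype.card V = n := ⟨_, rfl⟩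
  induction n using Nat.strong_induction_on generalizing V with
  | _ n ihV =>
  induction G using WellFoundedLT.induction with
  | _ G ihG =>
  by_cases hG : G = ⊥
  · subst hG
    refine ⟨X ^ Fintype.card V, isChromaticPolynomial_bot, ?_⟩
    simp [acyclicOrientations_bot, ← mul_pow]
  obtain ⟨u, v, huv⟩ : ∃ u v, G.Adj u v := by simpa [eq_bot_iff_forall_not_adj] using hG
  obtain ⟨χ₁, h₁, e₁⟩ := ihG _ (deleteEdges_singleton_lt huv)
  have hcard : Fintype.card {x // x ≠ v} + 1 = Fintype.card V := by
    rw [Fintype.card_subtype_compl, Fintype.card_subtype_eq]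
    have := Fintype.card_pos_iff.2 ⟨v⟩
    omega
  obtain ⟨χ₂, h₂, e₂⟩ := ihV _ (by omega) (G.contractEdge huv.ne) rfl
  refine ⟨χ₁ - χ₂, h₁.sub huv h₂, ?_⟩
  rw [card_acyclicOrientations_eq_deleteEdges_add_contractEdge huv, Nat.cast_add, ← e₁,
    ← e₂, ← hcard, eval_sub]
  ring

end SimpleGraph

/-- **Stanley's acyclic orientation theorem** : if `χ ∈ ℚ[X]` is the chromatic
polynomial of a finite simple graph `G` with `n` vertices (so `χ(k)` is the number
of proper colorings of `G` with colors `{1,…,k}` for every natural `k`), then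
`(-1)^n χ(-1)` is the number of acyclic orientations of `G`. Orientations are
encoded as Boolean relations `o` supported on the adjacency relation, choosing
exactly one direction for each edge; acyclicity says there is no directed cycle. -/
theorem acyclic_orientations (V : Type) [Fintype V] [DecidableEq V]
    (G : SimpleGraph V) (n : ℕ) (hn : Fintype.card V = n) (χ : Polynomial ℚ)
    (hχ : ∀ k : ℕ, χ.eval (k : ℚ) =
      ((Finset.univ.filter fun f : V → Fin k =>
          ∀ u v : V, G.Adj u v → f u ≠ f v).card : ℚ)) :
    (-1 : ℚ) ^ n * χ.eval (-1) =
      ((Finset.univ.filter fun o : V → V → Bool =>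
          (∀ u v : V, o u v = true → G.Adj u v) ∧
          (∀ u v : V, G.Adj u v → (o u v = true ↔ ¬ o v u = true)) ∧
          (∀ v : V, ¬ Relation.TransGen (fun a b : V => o a b = true) v v)).card : ℚ) := by
  obtain ⟨ψ, hψ, hsign⟩ := G.exists_isChromaticPolynomial_eval_neg_one
  rw [← hn, SimpleGraph.IsChromaticPolynomial.unique hχ hψ, hsign,
    SimpleGraph.card_acyclicOrientations_eq_card_filter_bool]
  congr
end

section
/- Let (P, ⪯) be a finite poset with p elements and let ω₁, ω₂ : P → [p] be bijections (labelings) that are equivalent, i.e. for every covering pair X ⋖ Y in P, ω₁(X) < ω₁(Y) if and only if ω₂(X) < ω₂(Y). Then for every subset S ⊆ [p−1], β(P, ω₁; S) = β(P, ω₂; S). -/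
open scoped Classical

/-- `β(P, ω; S)` : the number of linear extensions `e : [p] → P` whose descent set
with respect to the labeling `ω` equals `S` (1-based positions). -/
noncomputable def betaCount (α : Type) [PartialOrder α] [Fintype α] (p : ℕ)
    (ω : α ≃ Fin p) (S : Finset ℕ) : ℕ :=
  (Finset.univ.filter (fun e : Fin p ≃ α =>
      (∀ i j : Fin p, e i < e j → i < j) ∧
      desSet p (fun k => ((ω (e k) : ℕ))) = S)).card

open Equiv

/-! Exchanging the labels `a` and `a + 1` of a labeling changes no β-number as long as the
elements carrying them do not form a covering pair: the involution on linear extensions that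
transposes these two elements when they are consecutive (they are then incomparable, so the
result is again a linear extension) and does nothing otherwise preserves descent sets.

If `ω₁ ≠ ω₂`, the permutation `ω₂ ∘ ω₁⁻¹` has a descent at some pair of labels `a, a + 1`; when
`ω₁, ω₂` are equivalent the elements carrying these labels cannot form a covering pair, and
exchanging them in `ω₁` gives a labeling, still equivalent to `ω₂`, with fewer inversions
relative to `ω₂`. -/

lemma Equiv.apply_swap_apply {α β : Type*} [DecidableEq α] [DecidableEq β] (f : α ≃ β)
    (a b x : α) : f (swap a b x) = swap (f a) (f b) (f x) := by
  simp only [swap_apply_def, f.injective.eq_iff]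
  split_ifs <;> rfl

section Positions

variable {p : ℕ}

def Fin.Adjacent (i j : Fin p) : Prop := (i : ℕ) + 1 = j ∨ (j : ℕ) + 1 = i

lemma Fin.Adjacent.symm {i j : Fin p} (h : Fin.Adjacent i j) : Fin.Adjacent j i := Or.symm h

lemma swap_lt_swap_iff_of_adjacent {A B u v : Fin p} (hAB : Fin.Adjacent A B)
    (h₁ : ¬(u = A ∧ v = B)) (h₂ : ¬(u = B ∧ v = A)) :
    swap A B u < swap A B v ↔ u < v := by
  unfold Fin.Adjacent at hAB
  simp only [swap_apply_def, Fin.lt_def, Fin.ext_iff] at *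
  split_ifs <;> omega

lemma Fin.strictMono_of_lt_next {β : Type*} [Preorder β] {f : Fin p → β}
    (h : ∀ i j : Fin p, (i : ℕ) + 1 = j → f i < f j) : StrictMono f := by
  cases p with
  | zero => exact fun i => i.elim0
  | succ n => exact Fin.strictMono_iff_lt_succ.2 fun i => h _ _ rfl

lemma desSet_congr {f g : Fin p → ℕ}
    (h : ∀ i j : Fin p, (i : ℕ) + 1 = j → (f j < f i ↔ g j < g i)) :
    desSet p f = desSet p g :=
  Finset.filter_congr fun i hi => exists_congr fun h₁ => exists_congr fun h₂ =>
    h ⟨i - 1, h₁⟩ ⟨i, h₂⟩ (by simp at hi ⊢; omega)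

end Positions

section LinearExtensions

variable {α : Type} [PartialOrder α] {p : ℕ}

def IsLinearExtension (e : Fin p ≃ α) : Prop := ∀ i j : Fin p, e i < e j → i < j

lemma IsLinearExtension.covBy {e : Fin p ≃ α} (he : IsLinearExtension e) {i j : Fin p}
    (hij : (i : ℕ) + 1 = j) (hlt : e i < e j) : e i ⋖ e j := by
  refine ⟨hlt, fun z hiz hzj => ?_⟩
  have h₁ := he i (e.symm z) (by simpa using hiz)
  have h₂ := he (e.symm z) j (by simpa using hzj)
  rw [Fin.lt_def] at h₁ h₂
  omega

lemma IsLinearExtension.not_lt_of_adjacent {e : Fin p ≃ α} (he : IsLinearExtension e)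
    {i j : Fin p} (hij : Fin.Adjacent i j) (hcov : ¬ e i ⋖ e j) : ¬ e i < e j := by
  intro hlt
  rcases hij with h | h
  · exact hcov (he.covBy h hlt)
  · have := he _ _ hlt
    rw [Fin.lt_def] at this
    omega

lemma IsLinearExtension.swap {e : Fin p ≃ α} (he : IsLinearExtension e) {i j : Fin p}
    (hij : Fin.Adjacent i j) (h₁ : ¬ e i ⋖ e j) (h₂ : ¬ e j ⋖ e i) :
    IsLinearExtension ((Equiv.swap i j).trans e) := by
  intro k l hkl
  rw [← swap_lt_swap_iff_of_adjacent hij]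
  · exact he _ _ hkl
  · rintro ⟨rfl, rfl⟩
    exact he.not_lt_of_adjacent hij.symm h₂ (by simpa using hkl)
  · rintro ⟨rfl, rfl⟩
    exact he.not_lt_of_adjacent hij h₁ (by simpa using hkl)

lemma IsLinearExtension.trans_swap {e : Fin p ≃ α} (he : IsLinearExtension e) {X Y : α}
    (hadj : Fin.Adjacent (e.symm X) (e.symm Y)) (hXY : ¬ X ⋖ Y) (hYX : ¬ Y ⋖ X) :
    IsLinearExtension (e.trans (Equiv.swap X Y)) := by
  have hconj : e.trans (Equiv.swap X Y) = (Equiv.swap (e.symm X) (e.symm Y)).trans e := by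
    ext k
    simp [Equiv.apply_swap_apply e]
  rw [hconj]
  exact he.swap hadj (by simpa using hXY) (by simpa using hYX)

end LinearExtensions

section SwapIfAdjacent

variable {α : Type} {p : ℕ}

noncomputable def swapIfAdjacent (X Y : α) (e : Fin p ≃ α) : Fin p ≃ α :=
  if Fin.Adjacent (e.symm X) (e.symm Y) then e.trans (swap X Y) else e

lemma swapIfAdjacent_involutive (X Y : α) :
    Function.Involutive (swapIfAdjacent (p := p) X Y) := by
  intro e
  by_cases h : Fin.Adjacent (e.symm X) (e.symm Y)
  · have h' : Fin.Adjacent ((e.trans (swap X Y)).symm X) ((e.trans (swap X Y)).symm Y) := by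
      simpa [symm_trans_apply] using h.symm
    simp only [swapIfAdjacent, if_pos h, if_pos h']
    ext k
    simp
  · simp only [swapIfAdjacent, if_neg h]

lemma IsLinearExtension.swapIfAdjacent [PartialOrder α] {e : Fin p ≃ α}
    (he : IsLinearExtension e) {X Y : α} (hXY : ¬ X ⋖ Y) (hYX : ¬ Y ⋖ X) :
    IsLinearExtension (swapIfAdjacent X Y e) := by
  unfold _root_.swapIfAdjacent
  split_ifs with h
  exacts [he.trans_swap h hXY hYX, he]

/-- If `X, Y` sit side by side in `e`, the two words are equal; otherwise they differ only by
exchanging the values `A, A ± 1` at non-adjacent positions, which moves no descent. -/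
lemma desSet_swapIfAdjacent (ω : α ≃ Fin p) {A B : Fin p} (hAB : Fin.Adjacent A B) {X Y : α}
    (hX : ω X = A) (hY : ω Y = B) (e : Fin p ≃ α) :
    desSet p (fun k => (ω (swapIfAdjacent X Y e k) : ℕ)) =
      desSet p (fun k => ((ω.trans (swap A B)) (e k) : ℕ)) := by
  unfold swapIfAdjacent
  split_ifs with h
  · simp [Equiv.apply_swap_apply ω, hX, hY]
  · have pos : ∀ {Z : α} {k : Fin p}, ω (e k) = ω Z → e.symm Z = k := fun h =>
      e.symm_apply_eq.2 (ω.injective h).symm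
    refine desSet_congr fun i j hij => ?_
    simp only [trans_apply]
    rw [← Fin.lt_def, ← Fin.lt_def, swap_lt_swap_iff_of_adjacent hAB]
    · rintro ⟨hj, hi⟩
      exact h (by rw [pos (hj.trans hX.symm), pos (hi.trans hY.symm)]; exact Or.inr hij)
    · rintro ⟨hj, hi⟩
      exact h (by rw [pos (hj.trans hY.symm), pos (hi.trans hX.symm)]; exact Or.inl hij)

end SwapIfAdjacent

section Labelings

variable {α : Type} [PartialOrder α] {p : ℕ}

theorem betaCount_trans_swap [Fintype α] (ω : α ≃ Fin p) {A B : Fin p}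
    (hAB : Fin.Adjacent A B)
    (hAB_cov : ¬ ω.symm A ⋖ ω.symm B) (hBA_cov : ¬ ω.symm B ⋖ ω.symm A) (S : Finset ℕ) :
    betaCount α p (ω.trans (swap A B)) S = betaCount α p ω S := by
  set X := ω.symm A
  set Y := ω.symm B
  have hX : ω X = A := ω.apply_symm_apply A
  have hY : ω Y = B := ω.apply_symm_apply B
  have hω : (ω.trans (swap A B)).trans (swap B A) = ω := by
    ext x
    simp [swap_comm B A]
  unfold betaCount
  refine Finset.card_nbij' (swapIfAdjacent X Y) (swapIfAdjacent X Y) ?_ ?_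
    (fun e _ => swapIfAdjacent_involutive X Y e) (fun e _ => swapIfAdjacent_involutive X Y e)
  all_goals
    intro e he
    obtain ⟨-, he, hS⟩ := Finset.mem_filter.1 he
    refine Finset.mem_filter.2
      ⟨Finset.mem_univ _, IsLinearExtension.swapIfAdjacent he hAB_cov hBA_cov, ?_⟩
  · rwa [desSet_swapIfAdjacent ω hAB hX hY]
  · rwa [desSet_swapIfAdjacent (ω.trans (swap A B)) hAB.symm (by simp [hX]) (by simp [hY]), hω]

lemma trans_swap_lt_trans_swap_iff (ω : α ≃ Fin p) {A B : Fin p} (hAB : Fin.Adjacent A B)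
    (hAB_cov : ¬ ω.symm A ⋖ ω.symm B) (hBA_cov : ¬ ω.symm B ⋖ ω.symm A) {X Y : α}
    (hXY : X ⋖ Y) : (ω.trans (swap A B)) X < (ω.trans (swap A B)) Y ↔ ω X < ω Y := by
  refine swap_lt_swap_iff_of_adjacent hAB ?_ ?_
  · rintro ⟨hX, hY⟩
    exact hAB_cov (by simpa [← hX, ← hY] using hXY)
  · rintro ⟨hX, hY⟩
    exact hBA_cov (by simpa [← hX, ← hY] using hXY)

end Labelings

section Inversions

variable {p : ℕ} {β : Type*} [LinearOrder β]

def inversions (f : Fin p → β) : Finset (Fin p × Fin p) :=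
  Finset.univ.filter fun x => x.1 < x.2 ∧ f x.2 < f x.1

lemma card_inversions_comp_swap_lt {f : Fin p → β} {i j : Fin p} (hij : (i : ℕ) + 1 = j)
    (hf : f j < f i) : (inversions (f ∘ swap i j)).card < (inversions f).card := by
  have hlt : i < j := Fin.lt_def.2 (by omega)
  have hmem : (i, j) ∈ inversions f := by simp [inversions, hlt, hf]
  have hmaps : Set.MapsTo ((swap i j).prodCongr (swap i j)) (inversions (f ∘ swap i j))
      ((inversions f).erase (i, j)) := by
    rintro ⟨k, l⟩ hkl
    simp only [inversions, Finset.coe_filter, Finset.mem_univ, true_and, Set.mem_ofPred_eq,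
      Function.comp_apply] at hkl
    obtain ⟨hkl, hfkl⟩ := hkl
    have hne : ¬(k = j ∧ l = i) := fun ⟨hk, hl⟩ => (hk ▸ hl ▸ hkl).asymm hlt
    simp only [Finset.coe_erase, Set.mem_sdiff, Finset.mem_coe, inversions, Finset.mem_filter,
      Finset.mem_univ, true_and, prodCongr_apply, Prod.map_apply, Set.mem_singleton_iff,
      Prod.ext_iff, swap_apply_eq_iff, swap_apply_left, swap_apply_right]
    refine ⟨⟨(swap_lt_swap_iff_of_adjacent (Or.inl hij) ?_ hne).2 hkl, hfkl⟩, hne⟩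
    rintro ⟨rfl, rfl⟩
    simp only [swap_apply_left, swap_apply_right] at hfkl
    exact hfkl.asymm hf
  calc (inversions (f ∘ swap i j)).card
      ≤ ((inversions f).erase (i, j)).card :=
        Finset.card_le_card_of_injOn _ hmaps (Equiv.injective _).injOn
    _ < (inversions f).card := Finset.card_erase_lt_of_mem hmem

end Inversions

theorem eq_of_forall_adjacent_le {α : Type} {p : ℕ} (ω₁ ω₂ : α ≃ Fin p)
    (h : ∀ A B : Fin p, (A : ℕ) + 1 = B → ω₂ (ω₁.symm A) ≤ ω₂ (ω₁.symm B)) : ω₁ = ω₂ := by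
  have hmono : StrictMono fun k => ω₂ (ω₁.symm k) :=
    Fin.strictMono_of_lt_next fun A B hAB => (h A B hAB).lt_of_ne fun h =>
      by simp only [EmbeddingLike.apply_eq_iff_eq, Fin.ext_iff] at h; omega
  refine Equiv.ext fun x => ?_
  simpa using congr($hmono.eq_id (ω₁ x)).symm

theorem beta_equivalent_labelings_general (α : Type) [PartialOrder α] [Fintype α]
    (p : ℕ) (ω₁ ω₂ : α ≃ Fin p)
    (hequiv : ∀ X Y : α, X ⋖ Y → ((ω₁ X : ℕ) < (ω₁ Y : ℕ) ↔ (ω₂ X : ℕ) < (ω₂ Y : ℕ)))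
    (S : Finset ℕ) :
    betaCount α p ω₁ S = betaCount α p ω₂ S := by
  induction hn : (inversions fun k => ω₂ (ω₁.symm k)).card using Nat.strong_induction_on
    generalizing ω₁ with
  | _ n ih =>
  by_cases hdesc : ∃ A B : Fin p, (A : ℕ) + 1 = B ∧ ω₂ (ω₁.symm B) < ω₂ (ω₁.symm A)
  · obtain ⟨A, B, hAB, hlt⟩ := hdesc
    have hAB_cov : ¬ ω₁.symm A ⋖ ω₁.symm B := fun h =>
      hlt.asymm ((hequiv _ _ h).1 (by simp only [apply_symm_apply]; omega))
    have hBA_cov : ¬ ω₁.symm B ⋖ ω₁.symm A := fun h => by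
      have := (hequiv _ _ h).2 hlt
      simp only [apply_symm_apply] at this
      omega
    rw [← betaCount_trans_swap ω₁ (Or.inl hAB) hAB_cov hBA_cov]
    refine ih _ ?_ _ (fun X Y h => ?_) rfl
    · rw [← hn]
      exact card_inversions_comp_swap_lt (f := fun k => ω₂ (ω₁.symm k)) hAB hlt
    · exact (trans_swap_lt_trans_swap_iff ω₁ (Or.inl hAB) hAB_cov hBA_cov h).trans (hequiv X Y h)
  · simp only [not_exists, not_and, not_lt] at hdesc
    rw [eq_of_forall_adjacent_le ω₁ ω₂ hdesc]

/-- If two labelings `ω₁, ω₂` of a finite poset `P` are equivalent — i.e. they agree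
in orientation on every covering pair — then `β(P, ω₁; S) = β(P, ω₂; S)` for every
`S ⊆ [p-1]`. -/
theorem beta_equivalent_labelings (α : Type) [PartialOrder α] [Fintype α]
    [DecidableEq α] (p : ℕ) (hp : 0 < p) (hcard : Fintype.card α = p)
    (ω₁ ω₂ : α ≃ Fin p)
    (hequiv : ∀ X Y : α, X ⋖ Y → ((ω₁ X : ℕ) < (ω₁ Y : ℕ) ↔ (ω₂ X : ℕ) < (ω₂ Y : ℕ)))
    (S : Finset ℕ) (hS : S ⊆ Finset.Ico 1 p) :
    betaCount α p ω₁ S = betaCount α p ω₂ S :=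
  beta_equivalent_labelings_general α p ω₁ ω₂ hequiv S
end

section
/- (Stanley's chain polytope theorem, lattice-point form.) Let (S, ⪯) be a finite poset. For every natural number m, the number of functions f : S → ℕ such that ∑_{x ∈ C} f(x) ≤ m for every nonempty chain C of S equals the number of functions g : S → {0, 1, …, m} such that g(x) ≥ g(y) whenever x ⪯ y. (Equivalently, the chain polytope and the order polytope of S contain equally many lattice points in each dilation, so they have the same Ehrhart polynomial.) -/
/-!
Stanley's transfer map. To `f : S → ℕ` attach `maxChainSum f x`, the largest value of
`∑_{t ∈ C} f t` over chains `C` with least element `x`; it satisfies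
`maxChainSum f x = f x + max_{y > x} maxChainSum f y`, so it is order-reversing and is bounded by
`m` exactly when every chain sum of `f` is. Conversely an order-reversing `g` is recovered as
`maxChainSum` of its upper gaps `x ↦ g x - max_{y > x} g y`, so `maxChainSum` maps the lattice
points of the `m`-th chain polytope bijectively onto those of the `m`-th order polytope.
-/

open Finset

open scoped Classical

theorem IsChain.exists_isLeast_of_wellFoundedLT {S : Type*} [PartialOrder S] [WellFoundedLT S]
    {C : Set S} (hC : IsChain (· ≤ ·) C) (hne : C.Nonempty) : ∃ x, IsLeast C x := by
  obtain ⟨x, hxC, hmin⟩ := exists_minimal_of_wellFoundedLT (· ∈ C) hne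
  refine ⟨x, hxC, fun y hy => ?_⟩
  rcases hC.total hxC hy with hxy | hyx
  · exact hxy
  · exact hmin hy hyx

namespace StanleyTransfer

variable {S : Type*} [PartialOrder S] [Fintype S]

noncomputable def maxChainSum (f : S → ℕ) : S → ℕ :=
  WellFoundedGT.fix fun x rec =>
    f x + (univ.filter (x < ·)).attach.sup fun y => rec y (mem_filter.1 y.2).2

theorem maxChainSum_eq (f : S → ℕ) (x : S) :
    maxChainSum f x = f x + (univ.filter (x < ·)).sup (maxChainSum f) := by
  rw [maxChainSum, WellFoundedGT.fix_eq, sup_attach]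

theorem sup_lt_le_maxChainSum (f : S → ℕ) (x : S) :
    (univ.filter (x < ·)).sup (maxChainSum f) ≤ maxChainSum f x := by
  rw [maxChainSum_eq f x]
  exact Nat.le_add_left _ _

theorem maxChainSum_antitone (f : S → ℕ) : Antitone (maxChainSum f) := by
  intro x y hxy
  rcases hxy.eq_or_lt with rfl | hlt
  · exact le_rfl
  · exact (le_sup (mem_filter.2 ⟨mem_univ y, hlt⟩)).trans (sup_lt_le_maxChainSum f x)

theorem sum_le_maxChainSum (f : S → ℕ) (x : S) {C : Finset S}
    (hC : IsChain (· ≤ ·) (C : Set S)) (hxC : ∀ t ∈ C, x ≤ t) :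
    ∑ t ∈ C, f t ≤ maxChainSum f x := by
  induction x using WellFoundedGT.induction generalizing C with
  | ind x ih =>
  have hrest : ∑ t ∈ C.erase x, f t ≤ (univ.filter (x < ·)).sup (maxChainSum f) := by
    rcases (C.erase x).eq_empty_or_nonempty with hempty | hne
    · simp [hempty]
    have hC' : IsChain (· ≤ ·) ((C.erase x : Finset S) : Set S) :=
      hC.mono (coe_subset.2 (erase_subset x C))
    obtain ⟨z, hzC, hzleast⟩ := hC'.exists_isLeast_of_wellFoundedLT (coe_nonempty.2 hne)
    have hxz : x < z :=
      (hxC z (mem_of_mem_erase hzC)).lt_of_ne (ne_of_mem_erase hzC).symm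
    exact (ih z hxz hC' hzleast).trans (le_sup (mem_filter.2 ⟨mem_univ z, hxz⟩))
  by_cases hx : x ∈ C
  · rw [← add_sum_erase C f hx, maxChainSum_eq]
    exact Nat.add_le_add_left hrest _
  · rw [← erase_eq_of_notMem hx]
    exact hrest.trans (sup_lt_le_maxChainSum f x)

theorem exists_isChain_sum_eq_maxChainSum (f : S → ℕ) (x : S) :
    ∃ C : Finset S, IsChain (· ≤ ·) (C : Set S) ∧ IsLeast (C : Set S) x ∧
      ∑ t ∈ C, f t = maxChainSum f x := by
  induction x using WellFoundedGT.induction with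
  | ind x ih =>
  rcases (univ.filter (x < ·)).eq_empty_or_nonempty with hempty | hne
  · exact ⟨{x}, by simp, by simp, by simp [maxChainSum_eq f x, hempty]⟩
  obtain ⟨y, hy, hsup⟩ := exists_mem_eq_sup _ hne (maxChainSum f)
  have hxy : x < y := (mem_filter.1 hy).2
  obtain ⟨D, hD, ⟨-, hyD⟩, hDsum⟩ := ih y hxy
  have hxD : ∀ t ∈ D, x ≤ t := fun t ht => hxy.le.trans (hyD ht)
  have hxD' : x ∉ D := fun hx => hxy.not_ge (hyD hx)
  refine ⟨insert x D, ?_, ?_, ?_⟩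
  · rw [coe_insert]
    exact hD.insert fun t ht _ => Or.inl (hxD t ht)
  · rw [coe_insert]
    exact ⟨Set.mem_insert x _, Set.forall_mem_insert.2 ⟨le_rfl, hxD⟩⟩
  · rw [sum_insert hxD', hDsum, maxChainSum_eq f x, hsup]

theorem maxChainSum_le_iff (f : S → ℕ) (m : ℕ) :
    (∀ x, maxChainSum f x ≤ m) ↔
      ∀ C : Finset S, C.Nonempty → IsChain (· ≤ ·) (C : Set S) → ∑ t ∈ C, f t ≤ m := by
  constructor
  · intro hm C hne hC
    obtain ⟨x, -, hxC⟩ := hC.exists_isLeast_of_wellFoundedLT (coe_nonempty.2 hne)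
    exact (sum_le_maxChainSum f x hC hxC).trans (hm x)
  · intro hm x
    obtain ⟨C, hC, ⟨hxC, -⟩, hsum⟩ := exists_isChain_sum_eq_maxChainSum f x
    exact hsum ▸ hm C ⟨x, hxC⟩ hC

noncomputable def upperGap (g : S → ℕ) (x : S) : ℕ :=
  g x - (univ.filter (x < ·)).sup g

theorem upperGap_maxChainSum (f : S → ℕ) : upperGap (maxChainSum f) = f := by
  funext x
  rw [upperGap, maxChainSum_eq f x]
  exact Nat.add_sub_cancel ..

theorem maxChainSum_upperGap {g : S → ℕ} (hg : Antitone g) : maxChainSum (upperGap g) = g := by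
  funext x
  induction x using WellFoundedGT.induction with
  | ind x ih =>
  have hsup : (univ.filter (x < ·)).sup (maxChainSum (upperGap g)) =
      (univ.filter (x < ·)).sup g :=
    sup_congr rfl fun y hy => ih y (mem_filter.1 hy).2
  have hle : (univ.filter (x < ·)).sup g ≤ g x :=
    Finset.sup_le fun y hy => hg (mem_filter.1 hy).2.le
  rw [maxChainSum_eq, hsup, upperGap]
  exact Nat.sub_add_cancel hle

theorem maxChainSum_injective : Function.Injective (maxChainSum (S := S)) :=
  Function.LeftInverse.injective upperGap_maxChainSum

end StanleyTransfer

open StanleyTransfer in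
/-- **Stanley's chain polytope theorem (lattice-point form)** : for a finite poset
`S` and every `m`, the number of lattice points of the `m`-th dilation of the
chain polytope (functions `f : S → ℕ` with `∑_{x ∈ C} f x ≤ m` for every nonempty
chain `C`) equals the number of lattice points of the `m`-th dilation of the order
polytope (order-reversing functions `g : S → {0,…,m}`). -/
theorem chain_polytope_order_polytope (S : Type) [Fintype S] [PartialOrder S]
    (m : ℕ) :
    Set.ncard {f : S → ℕ |
        ∀ C : Finset S, C.Nonempty → IsChain (· ≤ ·) (C : Set S) →
          (∑ x ∈ C, f x) ≤ m} =
    Set.ncard {g : S → ℕ |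
        (∀ x, g x ≤ m) ∧ ∀ x y : S, x ≤ y → g y ≤ g x} := by
  set B := {g : S → ℕ | (∀ x, g x ≤ m) ∧ ∀ x y : S, x ≤ y → g y ≤ g x}
  have hpre : maxChainSum ⁻¹' B = {f : S → ℕ |
      ∀ C : Finset S, C.Nonempty → IsChain (· ≤ ·) (C : Set S) → (∑ x ∈ C, f x) ≤ m} := by
    ext f
    simp only [B, Set.mem_preimage, Set.mem_ofPred_eq, ← maxChainSum_le_iff f m]
    exact and_iff_left fun _ _ hxy => maxChainSum_antitone f hxy
  have hrange : B ⊆ Set.range maxChainSum := fun g hg =>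
    ⟨upperGap g, maxChainSum_upperGap fun _ _ hxy => hg.2 _ _ hxy⟩
  rw [← hpre, ← Set.ncard_image_of_injective _ maxChainSum_injective,
    Set.image_preimage_eq_of_subset hrange]
end
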